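/- arXiv:0707.0213 — 12 statements merged into one kernel-verified Lean document; each statement's English description precedes it below -/
import Mathlib

section
/- If S is a set of n points in the plane (or on a circle) of diameter 1 all lying on a circle of radius strictly greater than 1/√3, then at most one pair of points of S is at distance exactly 1 (i.e., the number of diameter pairs is at most 1). -/
/-!
Let `{a, b}` be a diameter pair and `c` the centre of the circle, so `r² = η² + 1/4` for some `η`.
In the orthonormal frame `(a - b, J (a - b))` centred at `c` we have `a = (1/2, η)` and
`b = (-1/2, η)`. A point of the circle within distance `1` of both `a` and `b` lies on the short
arc from `a` to `b`: this is where `r > 1/√3` enters, since otherwise the chord `ab` subtends an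
angle of at least `2π/3` and the point of the circle opposite its midpoint would qualify as well.
Two points of that arc are at distance `1` only if they are its two endpoints.
-/

open Module Finset
open scoped RealInnerProductSpace

theorem abs_le_half_and_mul_pos_of_dist_ends_le_one {x y η : ℝ} (hη : 1 / 12 < η ^ 2)
    (hP : x ^ 2 + y ^ 2 = η ^ 2 + 1 / 4)
    (hu : (x - 1 / 2) ^ 2 + (y - η) ^ 2 ≤ 1) (hv : (x + 1 / 2) ^ 2 + (y - η) ^ 2 ≤ 1) :
    |x| ≤ 1 / 2 ∧ 0 < η * y := by
  have hu' : 2 * η ^ 2 - 1 / 2 ≤ x + 2 * η * y := by nlinarith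
  have hv' : 2 * η ^ 2 - 1 / 2 ≤ -x + 2 * η * y := by nlinarith
  have hx : |x| ≤ 1 / 2 := by
    rw [abs_le]
    constructor
    all_goals
      by_contra! h
      have : η ^ 2 < η * y := by linarith
      nlinarith [sq_nonneg (η - y), sq_nonneg (η + y)]
  refine ⟨hx, ?_⟩
  by_contra! h
  have hs : 0 ≤ -(2 * η * y) := by linarith
  have hA : 0 ≤ 1 / 2 - 2 * η ^ 2 - x := by linarith
  have hsq : (2 * η * y) ^ 2 ≤ (1 / 2 - 2 * η ^ 2 - x) * (1 / 2 - 2 * η ^ 2 + x) :=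
    calc (2 * η * y) ^ 2 = -(2 * η * y) * -(2 * η * y) := by ring
      _ ≤ (1 / 2 - 2 * η ^ 2 - x) * (1 / 2 - 2 * η ^ 2 + x) :=
        mul_le_mul (by linarith) (by linarith) hs hA
  have hη4 : η ^ 2 ≤ 1 / 4 := by linarith
  nlinarith [mul_nonneg (sub_nonneg.2 hη4) (sq_nonneg x)]

theorem sub_sq_eq_one_of_unit_chord {x y x' y' : ℝ} (hx : |x| ≤ 1 / 2) (hx' : |x'| ≤ 1 / 2)
    (hy : 0 < y * y') (hcirc : x ^ 2 + y ^ 2 = x' ^ 2 + y' ^ 2)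
    (hd : (x - x') ^ 2 + (y - y') ^ 2 = 1) : (x - x') ^ 2 = 1 := by
  rw [abs_le] at hx hx'
  -- `(R - x²)(R - x'²) - (R - 1/2 - x x')²` with `R = x² + y²`, which vanishes
  -- because `y y' = R - 1/2 - x x'`
  have key : y * y' * (1 - (x - x') ^ 2)
      + (1 - 2 * x * (x - x')) * (1 + 2 * x' * (x - x')) / 4 = 0 := by
    linear_combination y ^ 2 * hcirc
      - (y * y' + x ^ 2 + y ^ 2 - x * x' + 1 / 2 - (x - x') ^ 2) * (hcirc + hd) / 2
  have h1 : 0 ≤ 1 - (x - x') ^ 2 := by nlinarith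
  have h2 : 0 ≤ 1 - 2 * x * (x - x') := by nlinarith
  have h3 : 0 ≤ 1 + 2 * x' * (x - x') := by nlinarith
  nlinarith [mul_nonneg h2 h3, mul_nonneg hy.le h1]

theorem eq_ends_of_unit_chord {x y x' y' η : ℝ} (hη : 1 / 12 < η ^ 2)
    (hP : x ^ 2 + y ^ 2 = η ^ 2 + 1 / 4) (hQ : x' ^ 2 + y' ^ 2 = η ^ 2 + 1 / 4)
    (hPu : (x - 1 / 2) ^ 2 + (y - η) ^ 2 ≤ 1) (hPv : (x + 1 / 2) ^ 2 + (y - η) ^ 2 ≤ 1)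
    (hQu : (x' - 1 / 2) ^ 2 + (y' - η) ^ 2 ≤ 1) (hQv : (x' + 1 / 2) ^ 2 + (y' - η) ^ 2 ≤ 1)
    (hPQ : (x - x') ^ 2 + (y - y') ^ 2 = 1) :
    ((x = 1 / 2 ∧ x' = -(1 / 2)) ∨ (x = -(1 / 2) ∧ x' = 1 / 2)) ∧ y = η ∧ y' = η := by
  obtain ⟨hx, hηy⟩ := abs_le_half_and_mul_pos_of_dist_ends_le_one hη hP hPu hPv
  obtain ⟨hx', hηy'⟩ := abs_le_half_and_mul_pos_of_dist_ends_le_one hη hQ hQu hQv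
  have hyy' : 0 < y * y' := by
    refine pos_of_mul_pos_right (a := η ^ 2) ?_ (sq_nonneg η)
    convert mul_pos hηy hηy' using 1
    ring
  have hd := sub_sq_eq_one_of_unit_chord hx hx' hyy' (hP.trans hQ.symm) hPQ
  rw [abs_le] at hx hx'
  have hxx' : (x = 1 / 2 ∧ x' = -(1 / 2)) ∨ (x = -(1 / 2) ∧ x' = 1 / 2) := by
    rcases sq_eq_one_iff.1 hd with h | h
    · left; constructor <;> linarith
    · right; constructor <;> linarith
  have hx2 : x ^ 2 = 1 / 4 ∧ x' ^ 2 = 1 / 4 := by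
    rcases hxx' with ⟨rfl, rfl⟩ | ⟨rfl, rfl⟩ <;> norm_num
  have hy_eq : ∀ t, t ^ 2 = η ^ 2 → 0 < η * t → t = η := by
    intro t ht hηt
    rcases sq_eq_sq_iff_eq_or_eq_neg.1 ht with h | h
    · exact h
    · rw [h, mul_neg, neg_pos] at hηt
      exact absurd hηt (mul_self_nonneg η).not_gt
  exact ⟨hxx', hy_eq y (by linarith [hx2.1]) hηy, hy_eq y' (by linarith [hx2.2]) hηy'⟩

theorem Orientation.dist_sq_eq_inner_sub_sq_add_areaForm_sub_sq {V : Type*}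
    [NormedAddCommGroup V] [InnerProductSpace ℝ V] [Fact (finrank ℝ V = 2)]
    (o : Orientation ℝ V (Fin 2)) {e : V} (he : ‖e‖ = 1) (c p q : V) :
    dist p q ^ 2 = (⟪e, p - c⟫ - ⟪e, q - c⟫) ^ 2
      + (o.areaForm e (p - c) - o.areaForm e (q - c)) ^ 2 := by
  rw [dist_eq_norm, ← sub_sub_sub_cancel_right p q c, ← inner_sub_right, ← map_sub,
    o.inner_sq_add_areaForm_sq, he, one_pow, one_mul]

theorem eq_and_eq_or_eq_and_eq_of_unit_chords {V : Type*} [NormedAddCommGroup V]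
    [InnerProductSpace ℝ V] [Fact (finrank ℝ V = 2)] {a b p q c : V} {r : ℝ}
    (hr : 1 / 3 < r ^ 2)
    (ha : dist a c = r) (hb : dist b c = r) (hp : dist p c = r) (hq : dist q c = r)
    (hab : dist a b = 1) (hpq : dist p q = 1)
    (hpa : dist p a ≤ 1) (hpb : dist p b ≤ 1) (hqa : dist q a ≤ 1) (hqb : dist q b ≤ 1) :
    (p = a ∧ q = b) ∨ (p = b ∧ q = a) := by
  have := FiniteDimensional.of_fact_finrank_eq_two (K := ℝ) (V := V)
  let o : Orientation ℝ V (Fin 2) := (finBasisOfFinrankEq ℝ V Fact.out).orientation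
  have he : ‖a - b‖ = 1 := by rwa [← dist_eq_norm]
  set X : V → ℝ := fun z => ⟪a - b, z - c⟫
  set Y : V → ℝ := fun z => o.areaForm (a - b) (z - c)
  have hd : ∀ z w, dist z w ^ 2 = (X z - X w) ^ 2 + (Y z - Y w) ^ 2 :=
    o.dist_sq_eq_inner_sub_sq_add_areaForm_sub_sq he c
  have hle : ∀ z w, dist z w ≤ 1 → (X z - X w) ^ 2 + (Y z - Y w) ^ 2 ≤ 1 :=
    fun z w h => hd z w ▸ pow_le_one₀ dist_nonneg h
  have hc : ∀ z, dist z c = r → X z ^ 2 + Y z ^ 2 = r ^ 2 := by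
    intro z hz
    simpa [X, Y, hz] using (hd z c).symm
  have hext : ∀ z w, X z = X w → Y z = Y w → z = w := by
    intro z w hX hY
    simpa [hX, hY] using hd z w
  have hXab : X a - X b = 1 := by
    simp only [X, ← inner_sub_right, sub_sub_sub_cancel_right, real_inner_self_eq_norm_sq, he]
    norm_num
  have hYab : Y b = Y a := by
    rw [eq_comm, ← sub_eq_zero]
    simp only [Y, ← map_sub, sub_sub_sub_cancel_right, o.areaForm_apply_self]
  have hXab' : (X a - X b) * (X a + X b) = 0 := by
    linear_combination hc a ha - hc b hb + (Y a + Y b) * hYab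
  have hXa : X a = 1 / 2 := by nlinarith
  have hXb : X b = -(1 / 2) := by linarith
  have hra : Y a ^ 2 + 1 / 4 = r ^ 2 := by linear_combination hc a ha - (X a + 1 / 2) * hXa
  have hPa := hle p a hpa
  have hPb := hle p b hpb
  have hQa := hle q a hqa
  have hQb := hle q b hqb
  rw [hXa] at hPa hQa
  rw [hXb, hYab, sub_neg_eq_add] at hPb hQb
  obtain ⟨hx | hx, hyp, hyq⟩ := eq_ends_of_unit_chord (by linarith) (by linarith [hc p hp])
    (by linarith [hc q hq]) hPa hPb hQa hQb (by rw [← hd, hpq, one_pow])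
  · exact .inl ⟨hext p a (by linarith) hyp, hext q b (by linarith) (hyq.trans hYab.symm)⟩
  · exact .inr ⟨hext p b (by linarith) (hyp.trans hYab.symm), hext q a (by linarith) hyq⟩

open Classical in
/-- Number of ordered pairs of distinct points of `S` at distance exactly `1`
(twice the number of unordered such pairs). -/
noncomputable def unitPairs {d : ℕ} (S : Finset (EuclideanSpace ℝ (Fin d))) : ℕ :=
  (S.offDiag.filter fun p => dist p.1 p.2 = 1).card

/-- A set of diameter 1 on a circle of radius greater than `1/√3` has at most one
diameter pair. -/
theorem stmt_0 (S : Finset (EuclideanSpace ℝ (Fin 2))) (c : EuclideanSpace ℝ (Fin 2))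
    (r : ℝ) (hr : r > 1 / Real.sqrt 3)
    (hcirc : ∀ x ∈ S, dist x c = r)
    (hdiam : ∀ x ∈ S, ∀ y ∈ S, dist x y ≤ 1)
    (hattain : ∃ x ∈ S, ∃ y ∈ S, dist x y = 1) :
    unitPairs S ≤ 2 := by
  classical
  obtain ⟨a, ha, b, hb, hab⟩ := hattain
  have : Fact (finrank ℝ (EuclideanSpace ℝ (Fin 2)) = 2) := ⟨finrank_euclideanSpace_fin⟩
  have hr2 : 1 / 3 < r ^ 2 := by
    have h3 : (1 / Real.sqrt 3) ^ 2 = 1 / 3 := by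
      rw [div_pow, one_pow, Real.sq_sqrt (by norm_num)]
    exact h3 ▸ pow_lt_pow_left₀ hr (by positivity) two_ne_zero
  have hsub : S.offDiag.filter (fun p => dist p.1 p.2 = 1) ⊆ {(a, b), (b, a)} := by
    rintro ⟨p, q⟩ h
    simp only [mem_filter, mem_offDiag] at h
    obtain ⟨⟨hp, hq, -⟩, hpq⟩ := h
    rcases eq_and_eq_or_eq_and_eq_of_unit_chords hr2 (hcirc a ha) (hcirc b hb) (hcirc p hp)
      (hcirc q hq) hab hpq (hdiam p hp a ha) (hdiam p hp b hb) (hdiam q hq a ha)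
      (hdiam q hq b hb) with ⟨rfl, rfl⟩ | ⟨rfl, rfl⟩ <;> simp
  unfold unitPairs
  exact (card_le_card hsub).trans card_le_two
end

section
/- Let S be a set of n points on a circle of radius 1/√2 in ℝ³ (or ℝ²). Then the number of unordered pairs of points of S at distance exactly 1 is at most n, and at most n−1 if n is not divisible by 4. -/
open Finset Complex

lemma card_offDiag_filter_dist_image {E F : Type*} [MetricSpace E] [PseudoMetricSpace F]
    [DecidableEq E] [DecidableEq F] {f : E → F} (hf : Isometry f) (S : Finset E) (r : ℝ) :
    #((S.image f).offDiag.filter fun p => dist p.1 p.2 = r) =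
      #(S.offDiag.filter fun p => dist p.1 p.2 = r) := by
  have : ((S.image f).offDiag.filter fun p => dist p.1 p.2 = r) =
      (S.offDiag.filter fun p => dist p.1 p.2 = r).image (Prod.map f f) := by
    ext ⟨u, v⟩
    simp only [mem_filter, mem_offDiag, mem_image, Prod.exists, Prod.map, Prod.mk.injEq]
    constructor
    · rintro ⟨⟨⟨x, hx, rfl⟩, ⟨y, hy, rfl⟩, hxy⟩, hd⟩
      exact ⟨x, y, ⟨⟨hx, hy, fun h => hxy (h ▸ rfl)⟩, by rwa [hf.dist_eq] at hd⟩, rfl, rfl⟩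
    · rintro ⟨x, y, ⟨⟨hx, hy, hxy⟩, hd⟩, rfl, rfl⟩
      exact ⟨⟨⟨x, hx, rfl⟩, ⟨y, hy, rfl⟩, hf.injective.ne hxy⟩, by rwa [hf.dist_eq]⟩
  rw [this, card_image_of_injective _ (hf.injective.prodMap hf.injective)]

lemma norm_sub_sq_eq_two_mul_norm_sq_iff {z w : ℂ} (h : ‖z‖ = ‖w‖) :
    ‖z - w‖ ^ 2 = 2 * ‖w‖ ^ 2 ↔ z = I * w ∨ w = I * z := by
  have hsq : z.re ^ 2 + z.im ^ 2 = w.re ^ 2 + w.im ^ 2 := by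
    have h2 := congrArg (· ^ 2) h
    simp only [Complex.sq_norm, Complex.normSq_apply] at h2
    linear_combination h2
  -- By Lagrange's identity both sides equal `4 (re (z * conj w))²`.
  have key : ‖z - I * w‖ ^ 2 * ‖z + I * w‖ ^ 2 = (‖z - w‖ ^ 2 - 2 * ‖w‖ ^ 2) ^ 2 := by
    simp only [Complex.sq_norm, Complex.normSq_apply, sub_re, sub_im, add_re, add_im, mul_re,
      mul_im, I_re, I_im]
    linear_combination 4 * (z.re * w.re + z.im * w.im) * hsq
  rw [← sub_eq_zero, ← sq_eq_zero_iff, ← key, mul_eq_zero, pow_eq_zero_iff two_ne_zero,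
    pow_eq_zero_iff two_ne_zero, norm_eq_zero, norm_eq_zero, sub_eq_zero]
  refine or_congr_right ⟨fun h => ?_, fun h => ?_⟩
  · linear_combination (-I) * h + w * I_sq
  · linear_combination I * h + z * I_sq

lemma dist_eq_one_iff_of_norm_eq_inv_sqrt_two {z w : ℂ} (hz : ‖z‖ = 1 / √2)
    (hw : ‖w‖ = 1 / √2) :
    dist z w = 1 ↔ z = I * w ∨ w = I * z := by
  rw [← norm_sub_sq_eq_two_mul_norm_sq_iff (hz.trans hw.symm), hw, dist_eq_norm, div_pow,
    Real.sq_sqrt zero_le_two, one_pow, mul_one_div_cancel two_ne_zero,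
    pow_eq_one_iff_of_nonneg (norm_nonneg _) two_ne_zero]

lemma card_offDiag_filter_fst_eq_apply_snd {α : Type*} [DecidableEq α] (T : Finset α)
    (g : α → α) (hg : ∀ w ∈ T, g w ≠ w) :
    #(T.offDiag.filter fun p => p.1 = g p.2) = #(T.filter fun w => g w ∈ T) := by
  refine card_nbij' Prod.snd (fun w => (g w, w)) ?_ ?_ ?_ ?_
  · intro p hp
    simp only [mem_coe, mem_filter, mem_offDiag] at hp ⊢
    exact ⟨hp.1.2.1, hp.2 ▸ hp.1.1⟩
  · intro w hw
    simp only [mem_coe, mem_filter, mem_offDiag] at hw ⊢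
    exact ⟨⟨hw.2, hw.1, hg w hw.1⟩, trivial⟩
  · intro p hp
    simp only [mem_coe, mem_filter] at hp
    exact Prod.ext hp.2.symm rfl
  · intro w _
    rfl

lemma card_offDiag_filter_I_mul (T : Finset ℂ) (h0 : 0 ∉ T) :
    #(T.offDiag.filter fun p => p.1 = I * p.2 ∨ p.2 = I * p.1) =
      2 * #(T.filter fun w => I * w ∈ T) := by
  have hI : ∀ w ∈ T, I * w ≠ w := fun w hw h =>
    h0 ((by linear_combination (-(I + 1) / 2) * h + w / 2 * I_sq : w = 0) ▸ hw)
  have hswap : #(T.offDiag.filter fun p => p.2 = I * p.1) =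
      #(T.offDiag.filter fun p => p.1 = I * p.2) := by
    refine card_nbij' Prod.swap Prod.swap ?_ ?_ (fun _ _ => rfl) (fun _ _ => rfl) <;>
      · intro p hp
        simp only [mem_coe, mem_filter, mem_offDiag, Prod.fst_swap, Prod.snd_swap] at hp ⊢
        exact ⟨⟨hp.1.2.1, hp.1.1, hp.1.2.2.symm⟩, hp.2⟩
  have hdisj : Disjoint (T.offDiag.filter fun p => p.1 = I * p.2)
      (T.offDiag.filter fun p => p.2 = I * p.1) := by
    refine disjoint_filter.2 fun p hp h₁ h₂ => h0 ?_
    have : p.2 = 0 := by linear_combination (h₂ + I * h₁ + p.2 * I_sq) / 2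
    exact this ▸ (mem_offDiag.1 hp).2.1
  rw [filter_or, card_union_of_disjoint hdisj, hswap, card_offDiag_filter_fst_eq_apply_snd T _ hI,
    two_mul]

theorem IsPrimitiveRoot.dvd_card_of_forall_mul_mem {K : Type*} [Field K] [DecidableEq K]
    {ζ : K} {n : ℕ} [NeZero n] (hζ : IsPrimitiveRoot ζ n) {T : Finset K} (h0 : 0 ∉ T)
    (hT : ∀ z ∈ T, ζ * z ∈ T) : n ∣ #T := by
  have hpow : ∀ k, ∀ z ∈ T, ζ ^ k * z ∈ T := by
    intro k
    induction k with
    | zero => simp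
    | succ k ih =>
      intro z hz
      rw [pow_succ', mul_assoc]
      exact hT _ (ih z hz)
  rw [card_eq_sum_card_image (· ^ n) T]
  refine dvd_sum fun v hv => ?_
  obtain ⟨z₀, hz₀, rfl⟩ := mem_image.1 hv
  have hz₀0 : z₀ ≠ 0 := fun h => h0 (h ▸ hz₀)
  have hfiber : T.filter (fun z => z ^ n = z₀ ^ n) = (range n).image (ζ ^ · * z₀) := by
    ext z
    simp only [mem_filter, mem_image, mem_range]
    constructor
    · rintro ⟨-, hz⟩
      obtain ⟨i, hi, hζi⟩ := hζ.eq_pow_of_pow_eq_one (ξ := z / z₀)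
        (by rw [div_pow, hz, div_self (pow_ne_zero _ hz₀0)])
      exact ⟨i, hi, by rw [hζi, div_mul_cancel₀ _ hz₀0]⟩
    · rintro ⟨i, -, rfl⟩
      refine ⟨hpow i z₀ hz₀, ?_⟩
      rw [mul_pow, ← pow_mul, mul_comm i, pow_mul, hζ.pow_eq_one, one_pow, one_mul]
  rw [hfiber, card_image_of_injOn, card_range]
  intro i hi j hj hij
  exact hζ.pow_inj (mem_range.1 hi) (mem_range.1 hj) (mul_right_cancel₀ hz₀0 hij)

/-- Among `n` points on a circle of radius `1/√2` there are at most `n` unit-distance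
pairs, and at most `n - 1` if `n` is not divisible by `4`. -/
theorem stmt_1 (n : ℕ) (S : Finset (EuclideanSpace ℝ (Fin 2))) (c : EuclideanSpace ℝ (Fin 2))
    (hcard : S.card = n)
    (hcirc : ∀ x ∈ S, dist x c = 1 / Real.sqrt 2) :
    unitPairs S ≤ 2 * n ∧ (¬ (4 ∣ n) → unitPairs S ≤ 2 * (n - 1)) := by
  classical
  subst hcard
  let f : EuclideanSpace ℝ (Fin 2) → ℂ := fun p => orthonormalBasisOneI.repr.symm (p - c)
  have hf : Isometry f := Isometry.of_dist_eq fun p q => by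
    simp only [f, dist_eq_norm, ← map_sub, LinearIsometryEquiv.norm_map, sub_sub_sub_cancel_right]
  set T := S.image f
  have hnorm : ∀ z ∈ T, ‖z‖ = 1 / √2 := by
    simp only [T, mem_image, forall_exists_index, and_imp, forall_apply_eq_imp_iff₂]
    intro p hp
    rw [LinearIsometryEquiv.norm_map, ← dist_eq_norm, hcirc p hp]
  have hT0 : 0 ∉ T := fun h => by
    have h0 := hnorm 0 h
    rw [norm_zero] at h0
    exact (by positivity : (0 : ℝ) < 1 / √2).ne h0
  have hpairs : unitPairs S = 2 * #(T.filter fun w => I * w ∈ T) := by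
    rw [unitPairs, ← card_offDiag_filter_dist_image hf, filter_congr fun p hp =>
      dist_eq_one_iff_of_norm_eq_inv_sqrt_two (hnorm _ (mem_offDiag.1 hp).1)
        (hnorm _ (mem_offDiag.1 hp).2.1), card_offDiag_filter_I_mul T hT0]
  have hcardT : #T = #S := card_image_of_injective S hf.injective
  have hle : #(T.filter fun w => I * w ∈ T) ≤ #S := hcardT ▸ card_filter_le _ _
  refine ⟨by omega, fun h4 => ?_⟩
  have hne : #(T.filter fun w => I * w ∈ T) ≠ #S := fun heq => h4 <| hcardT ▸
    isPrimitiveRoot_I.dvd_card_of_forall_mul_mem hT0 (filter_card_eq (heq.trans hcardT.symm))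
  omega
end

section
/- For every n divisible by 4, there exists a set S of n points on a circle of radius 1/√2 such that exactly n unordered pairs of points of S are at distance 1. -/
open Complex Finset Polynomial

theorem unitPairs_eq_sum_card {d : ℕ} (S : Finset (EuclideanSpace ℝ (Fin d))) :
    unitPairs S = ∑ x ∈ S, #{y ∈ S | dist x y = 1} := by
  classical
  have hoff : S.offDiag.filter (fun p => dist p.1 p.2 = 1) =
      (S ×ˢ S).filter (fun p => dist p.1 p.2 = 1) := by
    ext ⟨x, y⟩
    simp only [mem_filter, mem_offDiag, mem_product]
    constructor
    · tauto
    · rintro ⟨⟨hx, hy⟩, h⟩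
      refine ⟨⟨hx, hy, ?_⟩, h⟩
      rintro rfl
      simp at h
  rw [unitPairs, hoff, card_filter, sum_product]
  simp_rw [card_filter]

theorem unitPairs_image_of_isometry {X : Type*} [MetricSpace X] {d : ℕ}
    {f : X → EuclideanSpace ℝ (Fin d)} (hf : Isometry f) (s : Finset X) :
    unitPairs (s.image f) = ∑ x ∈ s, #{y ∈ s | dist x y = 1} := by
  classical
  rw [unitPairs_eq_sum_card, sum_image hf.injective.injOn]
  refine sum_congr rfl fun x _ => ?_
  rw [filter_image, card_image_of_injective _ hf.injective]
  simp only [hf.dist_eq]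

theorem Complex.dist_eq_sqrt_two_mul_norm_iff {x z : ℂ} (h : ‖z‖ = ‖x‖) :
    dist x z = √2 * ‖x‖ ↔ z = I * x ∨ z = -(I * x) := by
  have hsq : dist x z = √2 * ‖x‖ ↔ dist x z ^ 2 = 2 * ‖x‖ ^ 2 := by
    rw [← pow_left_inj₀ dist_nonneg (by positivity) two_ne_zero, mul_pow,
      Real.sq_sqrt zero_le_two]
  have h' : z.re * z.re + z.im * z.im = x.re * x.re + x.im * x.im := by
    rw [← normSq_apply, ← normSq_apply, ← Complex.sq_norm, ← Complex.sq_norm, h]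
  rw [hsq, dist_eq, Complex.sq_norm, Complex.sq_norm, normSq_apply, normSq_apply]
  simp only [Complex.ext_iff, mul_re, mul_im, I_re, I_im, neg_re, neg_im, sub_re, sub_im]
  constructor
  · intro hd
    have horth : x.re * z.re + x.im * z.im = 0 := by
      linear_combination (-1 / 2) * hd + (1 / 2) * h'
    -- `‖z - I x‖² ‖z + I x‖² = (‖z‖² - ‖x‖²)² + 4 ⟪x, z⟫²`
    have hprod : ((z.re + x.im) ^ 2 + (z.im - x.re) ^ 2) *
        ((z.re - x.im) ^ 2 + (z.im + x.re) ^ 2) = 0 := by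
      linear_combination (z.re * z.re + z.im * z.im - x.re * x.re - x.im * x.im) * h' +
        4 * (x.re * z.re + x.im * z.im) * horth
    rcases mul_eq_zero.mp hprod with h0 | h0
    · left; constructor <;> nlinarith [sq_nonneg (z.re + x.im), sq_nonneg (z.im - x.re)]
    · right; constructor <;> nlinarith [sq_nonneg (z.re - x.im), sq_nonneg (z.im + x.re)]
  · rintro (⟨h1, h2⟩ | ⟨h1, h2⟩) <;> rw [h1, h2] <;> ring

theorem Polynomial.mem_nthRootsFinset_one_of_dvd {R : Type*} [CommRing R] [IsDomain R] {ζ : R}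
    {k n : ℕ} (hn : 0 < n) (hk : k ∣ n) (hζ : ζ ^ k = 1) : ζ ∈ nthRootsFinset n (1 : R) := by
  obtain ⟨m, rfl⟩ := hk
  rw [mem_nthRootsFinset hn, pow_mul, hζ, one_pow]

theorem IsPrimitiveRoot.card_nthRootsFinset_pow {R : Type*} [CommRing R] [IsDomain R] {ζ : R}
    {n : ℕ} (h : IsPrimitiveRoot ζ n) {a : R} (ha : a ≠ 0) : #(nthRootsFinset n (a ^ n)) = n := by
  classical
  rw [nthRootsFinset_def, Multiset.toFinset_card_of_nodup (h.nthRoots_nodup (pow_ne_zero _ ha)),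
    h.card_nthRoots, if_pos ⟨a, rfl⟩]

theorem Complex.norm_eq_of_mem_nthRootsFinset {n : ℕ} {r : ℝ} (hr : 0 ≤ r) {z : ℂ}
    (hz : z ∈ nthRootsFinset n ((r : ℂ) ^ n)) : ‖z‖ = r := by
  rcases n.eq_zero_or_pos with rfl | hn
  · simp at hz
  have := congrArg norm ((mem_nthRootsFinset hn _).mp hz)
  rw [norm_pow, norm_pow, norm_real, Real.norm_of_nonneg hr] at this
  exact (pow_left_inj₀ (norm_nonneg z) hr hn.ne').mp this

theorem Complex.card_filter_dist_nthRootsFinset {n : ℕ} (hn : 0 < n) (h4 : 4 ∣ n) {r : ℝ}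
    (hr : 0 < r) {x : ℂ} (hx : x ∈ nthRootsFinset n ((r : ℂ) ^ n)) :
    #{z ∈ nthRootsFinset n ((r : ℂ) ^ n) | dist x z = √2 * r} = 2 := by
  have hxr := norm_eq_of_mem_nthRootsFinset hr.le hx
  have hx0 : x ≠ 0 := by rintro rfl; simp at hxr; linarith
  have hdist : ∀ z ∈ nthRootsFinset n ((r : ℂ) ^ n),
      dist x z = √2 * r ↔ z = I * x ∨ z = -(I * x) := fun z hz => by
    rw [← hxr]
    exact dist_eq_sqrt_two_mul_norm_iff (by rw [hxr, norm_eq_of_mem_nthRootsFinset hr.le hz])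
  have hrot : ∀ ζ : ℂ, ζ ^ 4 = 1 → ζ * x ∈ nthRootsFinset n ((r : ℂ) ^ n) := fun ζ hζ => by
    simpa using mul_mem_nthRootsFinset (mem_nthRootsFinset_one_of_dvd hn h4 hζ) hx
  have hmem : ∀ z, z = I * x ∨ z = -(I * x) → z ∈ nthRootsFinset n ((r : ℂ) ^ n) := by
    rintro z (rfl | rfl)
    · exact hrot I I_pow_four
    · simpa using hrot (-I) (by rw [neg_pow, I_pow_four]; norm_num)
  have hneigh : {z ∈ nthRootsFinset n ((r : ℂ) ^ n) | dist x z = √2 * r} =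
      {I * x, -(I * x)} := by
    ext z
    simp only [mem_filter, mem_insert, mem_singleton]
    exact ⟨fun ⟨hz, hd⟩ => (hdist z hz).mp hd, fun h => ⟨hmem z h, (hdist z (hmem z h)).mpr h⟩⟩
  rw [hneigh, card_pair]
  exact fun h => hx0 (by simpa using self_eq_neg.mp h)

/-- For every `n` divisible by `4` there are `n` points on a circle of radius `1/√2`
with exactly `n` unit-distance pairs. -/
theorem stmt_2 (n : ℕ) (hn : 4 ∣ n) :
    ∃ (S : Finset (EuclideanSpace ℝ (Fin 2))) (c : EuclideanSpace ℝ (Fin 2)),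
      S.card = n ∧ (∀ x ∈ S, dist x c = 1 / Real.sqrt 2) ∧ unitPairs S = 2 * n := by
  rcases n.eq_zero_or_pos with rfl | hn0
  · exact ⟨∅, 0, rfl, by simp, by simp [unitPairs]⟩
  set r : ℝ := 1 / √2
  have hr : 0 < r := by positivity
  set T := nthRootsFinset n ((r : ℂ) ^ n)
  have hT : #T = n :=
    (isPrimitiveRoot_exp n hn0.ne').card_nthRootsFinset_pow (ofReal_ne_zero.mpr hr.ne')
  let e := Complex.orthonormalBasisOneI.repr
  refine ⟨T.image e, 0, ?_, ?_, ?_⟩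
  · rw [card_image_of_injective _ e.injective, hT]
  · simp only [mem_image, forall_exists_index, and_imp]
    rintro _ z hz rfl
    rw [dist_zero_right, e.norm_map, norm_eq_of_mem_nthRootsFinset hr.le hz]
  · have hunit : √2 * r = 1 := by simp [r]
    rw [unitPairs_image_of_isometry e.isometry, ← hunit,
      sum_congr rfl fun x hx => card_filter_dist_nthRootsFinset hn0 hn hr hx, sum_const, hT,
      smul_eq_mul, mul_comm]
end

section
/- Let A and B be finite subsets of ℝ^d, each of cardinality at least 3, such that ‖a − b‖ = 1 for all a ∈ A and b ∈ B. Then there exist a point c ∈ ℝ^d and radii r_A, r_B ≥ 0 with r_A² + r_B² = 1 such that every point of A is at distance r_A from c and every point of B is at distance r_B from c. -/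
/-!
Equal distances make every difference of two points of `A` orthogonal to every difference of
two points of `B`. Hence all points of `A` have the same orthogonal projection `c` onto the affine
span of `B`, and Pythagoras gives `dist a c ^ 2 + dist b c ^ 2 = 1` for all `a ∈ A`, `b ∈ B`:
fixing `b` shows that `dist a c` is constant on `A`, fixing `a` that `dist b c` is constant on `B`.
-/

open EuclideanGeometry AffineSubspace

theorem isOrtho_vectorSpan_of_dist_eq {V P : Type*} [NormedAddCommGroup V]
    [InnerProductSpace ℝ V] [MetricSpace P] [NormedAddTorsor V P] {A B : Set P} {r : ℝ}
    (h : ∀ a ∈ A, ∀ b ∈ B, dist a b = r) : vectorSpan ℝ A ⟂ vectorSpan ℝ B := by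
  rw [vectorSpan_def, vectorSpan_def, Submodule.isOrtho_span]
  rintro _ ⟨a, ha, a', ha', rfl⟩ _ ⟨b, hb, b', hb', rfl⟩
  exact inner_vsub_vsub_of_dist_eq_of_dist_eq
    (by rw [dist_comm, h a' ha' b' hb', dist_comm, h a' ha' b hb])
    (by rw [dist_comm, h a ha b' hb', dist_comm, h a ha b hb])

theorem exists_dist_sq_add_dist_sq_eq_of_dist_eq {V P : Type*} [NormedAddCommGroup V]
    [InnerProductSpace ℝ V] [MetricSpace P] [NormedAddTorsor V P] {A B : Set P} (hA : A.Nonempty)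
    (hB : B.Nonempty) (hB_fin : B.Finite) {r : ℝ} (h : ∀ a ∈ A, ∀ b ∈ B, dist a b = r) :
    ∃ c : P, ∀ a ∈ A, ∀ b ∈ B, dist a c ^ 2 + dist b c ^ 2 = r ^ 2 := by
  obtain ⟨a₀, ha₀⟩ := hA
  let S := affineSpan ℝ B
  have : Nonempty S := (hB.mono (subset_affineSpan ℝ B)).to_subtype
  have : FiniteDimensional ℝ S.direction :=
    finiteDimensional_direction_affineSpan_of_finite ℝ hB_fin
  refine ⟨orthogonalProjection S a₀, fun a ha b hb => ?_⟩
  have hproj : orthogonalProjection S a = orthogonalProjection S a₀ := by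
    rw [orthogonalProjection_eq_orthogonalProjection_iff_vsub_mem, direction_affineSpan]
    exact Submodule.isOrtho_iff_le.mp (isOrtho_vectorSpan_of_dist_eq h)
      (vsub_mem_vectorSpan ℝ ha ha₀)
  have hpyth := dist_sq_eq_dist_orthogonalProjection_sq_add_dist_orthogonalProjection_sq a
    (subset_affineSpan ℝ B hb)
  rw [hproj, dist_comm b a, h a ha b hb] at hpyth
  linear_combination -hpyth

/-- Lenz lemma (spheres part): two finite sets of size at least 3 at mutual unit
distance lie on concentric spheres whose squared radii sum to 1. -/
theorem stmt_3 {d : ℕ} (A B : Finset (EuclideanSpace ℝ (Fin d)))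
    (hA : 3 ≤ A.card) (hB : 3 ≤ B.card)
    (h : ∀ a ∈ A, ∀ b ∈ B, dist a b = 1) :
    ∃ (c : EuclideanSpace ℝ (Fin d)) (rA rB : ℝ), 0 ≤ rA ∧ 0 ≤ rB ∧
      rA ^ 2 + rB ^ 2 = 1 ∧ (∀ a ∈ A, dist a c = rA) ∧ (∀ b ∈ B, dist b c = rB) := by
  obtain ⟨a₀, ha₀⟩ := Finset.card_pos.mp (by omega : 0 < A.card)
  obtain ⟨b₀, hb₀⟩ := Finset.card_pos.mp (by omega : 0 < B.card)
  obtain ⟨c, hc⟩ := exists_dist_sq_add_dist_sq_eq_of_dist_eq ⟨a₀, ha₀⟩ ⟨b₀, hb₀⟩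
    B.finite_toSet h
  have dist_eq_of_sq_eq {x y : EuclideanSpace ℝ (Fin d)} (hxy : dist x c ^ 2 = dist y c ^ 2) :
      dist x c = dist y c :=
    (pow_left_inj₀ dist_nonneg dist_nonneg two_ne_zero).mp hxy
  refine ⟨c, dist a₀ c, dist b₀ c, dist_nonneg, dist_nonneg, by simpa using hc a₀ ha₀ b₀ hb₀,
    fun a ha => ?_, fun b hb => ?_⟩
  · exact dist_eq_of_sq_eq (by linarith [hc a ha b₀ hb₀, hc a₀ ha₀ b₀ hb₀])
  · exact dist_eq_of_sq_eq (by linarith [hc a₀ ha₀ b hb, hc a₀ ha₀ b₀ hb₀])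
end

section
/- Let A and B be finite subsets of ℝ^d, each of cardinality at least 3, such that ‖a − b‖ = 1 for all a ∈ A, b ∈ B. Then the affine span of A and the affine span of B are orthogonal: for all a, a' ∈ A and b, b' ∈ B, the vectors a − a' and b − b' are orthogonal. -/
theorem stmt_4_general {d : ℕ} (A B : Finset (EuclideanSpace ℝ (Fin d)))
    (h : ∀ a ∈ A, ∀ b ∈ B, dist a b = 1) :
    ∀ a ∈ A, ∀ a' ∈ A, ∀ b ∈ B, ∀ b' ∈ B,
      inner ℝ (a - a') (b - b') = (0 : ℝ) := by
  intro a ha a' ha' b hb b' hb'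
  rw [real_inner_comm]
  exact EuclideanGeometry.inner_vsub_vsub_of_dist_eq_of_dist_eq
    ((h a' ha' b' hb').trans (h a ha b' hb').symm) ((h a' ha' b hb).trans (h a ha b hb).symm)

/-- Lenz lemma (orthogonality part): the affine spans of two finite sets of size at
least 3 at mutual unit distance are orthogonal. -/
theorem stmt_4 {d : ℕ} (A B : Finset (EuclideanSpace ℝ (Fin d)))
    (hA : 3 ≤ A.card) (hB : 3 ≤ B.card)
    (h : ∀ a ∈ A, ∀ b ∈ B, dist a b = 1) :
    ∀ a ∈ A, ∀ a' ∈ A, ∀ b ∈ B, ∀ b' ∈ B,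
      inner ℝ (a - a') (b - b') = (0 : ℝ) :=
  stmt_4_general A B h
end

section
/- Suppose 5 points on a 2-sphere in ℝ³ have diameter 1. Then the number of unordered pairs at distance exactly 1 is at most 7. -/
/-! If at least eight of the ten pairs were unit pairs, at most two pairs would be short, so some
point `e` would be at unit distance from the other four, which then lie on the circle cut out of
the sphere by the unit sphere around `e`. A point of that circle has at most two unit neighbours on
it, so the short pairs form a perfect matching of the four points and the unit pairs among them
contain a 4-cycle `a b c d`. A unit rhombus inscribed in a circle is a square, so its diagonal `bd`
has length `√2 > 1`, contradicting diameter `1`. -/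

open Finset Metric Module RealInnerProductSpace

section Combinatorics

variable {α : Type*} {R : α → α → Prop} [DecidableRel R] {T : Finset α}

theorem even_card_offDiag_filter (hR : Std.Symm R) :
    Even #{q ∈ T.offDiag | R q.1 q.2} := by
  rw [← ZMod.natCast_eq_zero_iff_even, card_eq_sum_ones, Nat.cast_sum, Nat.cast_one]
  refine sum_involution (fun q _ => q.swap) (fun _ _ => by decide) (fun q hq _ => ?_)
    (fun q hq => ?_) (fun q _ => q.swap_swap)
  · simp only [mem_filter, mem_offDiag] at hq
    exact fun h => hq.1.2.2 (congrArg Prod.snd h)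
  · simp only [mem_filter, mem_offDiag, Prod.fst_swap, Prod.snd_swap] at hq ⊢
    exact ⟨⟨hq.1.2.1, hq.1.1, Ne.symm hq.1.2.2⟩, hR.symm _ _ hq.2⟩

theorem card_le_card_offDiag_filter_not (h : ∀ v ∈ T, ∃ w ∈ T, v ≠ w ∧ ¬R v w) :
    #T ≤ #{q ∈ T.offDiag | ¬R q.1 q.2} := by
  choose! f hfT hf using h
  refine card_le_card_of_injOn (fun v => (v, f v)) (fun v hv => ?_) (fun v _ w _ h => ?_)
  · simp only [coe_filter, mem_offDiag, Set.mem_ofPred_eq]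
    exact ⟨⟨hv, hfT v hv, (hf v hv).1⟩, (hf v hv).2⟩
  · exact congrArg Prod.fst h

theorem exists_four_cycle_of_card_offDiag_filter_not_le [DecidableEq α] (hR : Std.Symm R)
    (hT : 2 < #T) (h : ∀ v ∈ T, ∃ w ∈ T, v ≠ w ∧ ¬R v w) (hbad : #{q ∈ T.offDiag | ¬R q.1 q.2} ≤ #T) :
    ∃ a ∈ T, ∃ b ∈ T, ∃ c ∈ T, ∃ d ∈ T, a ≠ c ∧ b ≠ d ∧ R a b ∧ R b c ∧ R c d ∧ R d a := by
  choose! f hfT hf using h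
  -- the pairs `(v, f v)` exhaust the non-adjacent pairs, so `f` is a fixed-point-free involution
  have hgraph : ∀ x ∈ T, ∀ y ∈ T, x ≠ y → ¬R x y → y = f x := by
    have himage : T.image (fun v => (v, f v)) = {q ∈ T.offDiag | ¬R q.1 q.2} := by
      refine eq_of_subset_of_card_le (fun q hq => ?_) ?_
      · obtain ⟨v, hv, rfl⟩ := mem_image.mp hq
        simp only [mem_filter, mem_offDiag]
        exact ⟨⟨hv, hfT v hv, (hf v hv).1⟩, (hf v hv).2⟩
      · rw [card_image_of_injOn fun v _ w _ h => congrArg Prod.fst h]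
        exact hbad
    intro x hx y hy hxy hxy'
    have hxy_mem : (x, y) ∈ T.image (fun v => (v, f v)) := by
      rw [himage]; simp [hx, hy, hxy, hxy']
    obtain ⟨v, -, hv⟩ := mem_image.mp hxy_mem
    rw [Prod.mk.injEq] at hv
    rw [← hv.1, hv.2]
  have hff : ∀ x ∈ T, f (f x) = x := fun x hx =>
    (hgraph _ (hfT x hx) _ hx (hf x hx).1.symm fun h => (hf x hx).2 (hR.symm _ _ h)).symm
  obtain ⟨a, ha⟩ : T.Nonempty := by rw [← card_pos]; omega
  obtain ⟨b, hb, hba, hbfa⟩ : ∃ b ∈ T, b ≠ a ∧ b ≠ f a := by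
    by_contra! hno
    have : T ⊆ {a, f a} := fun b hb => by
      by_cases hba : b = a
      · simp [hba]
      · simp [hno b hb hba]
    have := (card_le_card this).trans card_le_two
    omega
  have hfab : f a ≠ f b := fun h => hba (by rw [← hff b hb, ← h, hff a ha])
  have hfba : f b ≠ a := fun h => hbfa (by rw [← h, hff b hb])
  refine ⟨a, ha, b, hb, f a, hfT a ha, f b, hfT b hb, (hf a ha).1, (hf b hb).1, ?_, ?_, ?_, ?_⟩
  · by_contra hab
    exact hbfa (hgraph a ha b hb hba.symm hab)
  · by_contra hb'
    exact hfab (hgraph b hb _ (hfT a ha) hbfa hb')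
  · by_contra hab'
    exact hfba ((hgraph _ (hfT a ha) _ (hfT b hb) hfab hab').trans (hff a ha))
  · by_contra hb'
    exact hba ((hgraph _ (hfT b hb) a ha hfba hb').trans (hff b hb)).symm

end Combinatorics

section Geometry

variable {E : Type*} [NormedAddCommGroup E] [InnerProductSpace ℝ E]

theorem eq_zero_of_inner_eq_zero_of_finrank_eq_three [FiniteDimensional ℝ E]
    (hE : finrank ℝ E = 3) {u v w x : E} (hu : u ≠ 0) (hv : v ≠ 0) (hw : w ≠ 0)
    (huv : ⟪u, v⟫ = 0) (huw : ⟪u, w⟫ = 0) (hvw : ⟪v, w⟫ = 0)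
    (hxu : ⟪x, u⟫ = 0) (hxv : ⟪x, v⟫ = 0) (hxw : ⟪x, w⟫ = 0) : x = 0 := by
  by_contra hx
  have hind : LinearIndependent ℝ ![u, v, w, x] := by
    refine linearIndependent_of_ne_zero_of_inner_eq_zero (fun i => ?_) fun i j hij => ?_
    · fin_cases i <;> assumption
    · fin_cases i <;> fin_cases j <;> simp_all [real_inner_comm]
  have := hind.fintype_card_le_finrank
  simp [hE] at this

theorem inner_sub_sub_eq (x y o : E) :
    ⟪x - o, y - o⟫ = (dist x o ^ 2 + dist y o ^ 2 - dist x y ^ 2) / 2 := by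
  rw [dist_eq_norm, dist_eq_norm, dist_eq_norm, ← sub_sub_sub_cancel_right x y o,
    norm_sub_sq_real (x - o) (y - o)]
  ring

theorem inner_sub_sub_of_mem_sphere {x y o : E} {r : ℝ} (hx : x ∈ sphere o r)
    (hy : y ∈ sphere o r) : ⟪x - o, y - o⟫ = r ^ 2 - dist x y ^ 2 / 2 := by
  rw [inner_sub_sub_eq, mem_sphere.mp hx, mem_sphere.mp hy]; ring

theorem card_le_two_of_subset_three_spheres [FiniteDimensional ℝ E] (hE : finrank ℝ E = 3)
    {o p a : E} {r : ℝ} (hp : p ∈ sphere o r) (ha : a ∈ sphere o r) (hpa : dist p a = 1)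
    {s : Finset E} (hs : ↑s ⊆ sphere o r ∩ sphere p 1 ∩ sphere a 1) : #s ≤ 2 := by
  by_contra! h
  obtain ⟨x, hx, y, hy, z, hz, hxy, hxz, hyz⟩ := two_lt_card.mp h
  have hPA : ⟪p - o, a - o⟫ = r ^ 2 - 1 / 2 := by
    rw [inner_sub_sub_of_mem_sphere hp ha, hpa]; norm_num
  have hP : ⟪p - o, p - o⟫ = r ^ 2 := by simpa using inner_sub_sub_of_mem_sphere hp hp
  have hA : ⟪a - o, a - o⟫ = r ^ 2 := by simpa using inner_sub_sub_of_mem_sphere ha ha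
  have hs_inner : ∀ u ∈ s, ⟪u - o, u - o⟫ = r ^ 2 ∧ ⟪u - o, p - o⟫ = r ^ 2 - 1 / 2 ∧
      ⟪u - o, a - o⟫ = r ^ 2 - 1 / 2 := fun u hu => by
    obtain ⟨⟨huo, hup⟩, hua⟩ := hs hu
    refine ⟨by simpa using inner_sub_sub_of_mem_sphere huo huo, ?_, ?_⟩
    · rw [inner_sub_sub_of_mem_sphere huo hp, mem_sphere.mp hup]; norm_num
    · rw [inner_sub_sub_of_mem_sphere huo ha, mem_sphere.mp hua]; norm_num
  set P := p - o
  set A := a - o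
  have hPA2 : ⟪P + A, P + A⟫ = 4 * r ^ 2 - 1 := by
    simp only [inner_add_left, inner_add_right, hP, hA, hPA, real_inner_comm P A]; ring
  have hm : 4 * r ^ 2 - 1 ≠ 0 := by
    intro hm0
    have h0 : P + A = 0 := inner_self_eq_zero.mp (hPA2.trans hm0)
    have h1 := congrArg (⟪x - o, ·⟫) h0
    have h2 := congrArg (⟪P, ·⟫) h0
    simp only [inner_add_right, inner_zero_right, (hs_inner x hx).2.1, (hs_inner x hx).2.2, hP,
      hPA] at h1 h2
    linarith
  have hpa' : p ≠ a := by rintro rfl; simp at hpa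
  -- the difference of the two sides is orthogonal to `P + A`, `P - A` and `U - V`
  have key : ∀ u ∈ s, ∀ v ∈ s, u ≠ v →
      (4 * r ^ 2 - 1) • ((u - o) + (v - o)) = (4 * r ^ 2 - 2) • (P + A) := by
    intro u hu v hv huv
    obtain ⟨hUU, hUP, hUA⟩ := hs_inner u hu
    obtain ⟨hVV, hVP, hVA⟩ := hs_inner v hv
    set U := u - o
    set V := v - o
    rw [← sub_eq_zero]
    refine eq_zero_of_inner_eq_zero_of_finrank_eq_three hE (u := P + A) (v := P - A) (w := U - V)
      (fun h => hm (by rw [← hPA2, h, inner_zero_left])) (by simpa [P, A, sub_eq_zero] using hpa')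
      (by simpa [U, V, sub_eq_zero] using huv) ?_ ?_ ?_ ?_ ?_ ?_
    all_goals
      simp only [inner_add_left, inner_sub_left, inner_add_right, inner_sub_right,
        real_inner_smul_left, real_inner_comm P A, real_inner_comm U P, real_inner_comm V P,
        real_inner_comm U A, real_inner_comm V A, real_inner_comm U V, hP, hA, hPA, hUU, hVV,
        hUP, hUA, hVP, hVA]
      ring
  have hyz' : (4 * r ^ 2 - 1) • ((y - o) - (z - o)) = 0 := by
    rw [smul_sub, sub_eq_zero, ← add_right_inj ((4 * r ^ 2 - 1) • (x - o)), ← smul_add,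
      ← smul_add, key x hx y hy hxy, key x hx z hz hxz]
  have := (smul_eq_zero.mp hyz').resolve_left hm
  rw [sub_sub_sub_cancel_right, sub_eq_zero] at this
  exact hyz this

theorem dist_sq_eq_two_of_unit_rhombus_subset_circle [FiniteDimensional ℝ E]
    (hE : finrank ℝ E = 3) {o p a b c d : E} {r ρ : ℝ} (hpo : p ≠ o)
    (h : {a, b, c, d} ⊆ sphere o r ∩ sphere p ρ)
    (hab : dist a b = 1) (hbc : dist b c = 1) (hcd : dist c d = 1) (hda : dist d a = 1)
    (hac : a ≠ c) (hbd : b ≠ d) : dist b d ^ 2 = 2 := by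
  have hG : ∀ x ∈ ({a, b, c, d} : Set E), ∀ y ∈ ({a, b, c, d} : Set E),
      ⟪x - o, y - o⟫ = r ^ 2 - dist x y ^ 2 / 2 := fun x hx y hy =>
    inner_sub_sub_of_mem_sphere (h hx).1 (h hy).1
  have hN : ∀ x ∈ ({a, b, c, d} : Set E),
      ⟪x - o, p - o⟫ = (r ^ 2 + dist p o ^ 2 - ρ ^ 2) / 2 := fun x hx => by
    rw [inner_sub_sub_eq, mem_sphere.mp (h hx).1, mem_sphere.mp (h hx).2]
  have hAB := hG a (by simp) b (by simp)
  have hAD := hG a (by simp) d (by simp)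
  have hCB := hG c (by simp) b (by simp)
  have hCD := hG c (by simp) d (by simp)
  have hBB := hG b (by simp) b (by simp)
  have hDD := hG d (by simp) d (by simp)
  have hBD := hG b (by simp) d (by simp)
  have hAN := hN a (by simp)
  have hBN := hN b (by simp)
  have hCN := hN c (by simp)
  have hDN := hN d (by simp)
  rw [dist_comm] at hCB hAD
  rw [hab] at hAB; rw [hda] at hAD; rw [hbc] at hCB; rw [hcd] at hCD
  rw [dist_self] at hBB hDD
  set k := (r ^ 2 + dist p o ^ 2 - ρ ^ 2) / 2
  set A := a - o
  set B := b - o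
  set C := c - o
  set D := d - o
  set N := p - o
  set n := ⟪N, N⟫
  have hn : n ≠ 0 := by simpa [n, N, sub_eq_zero] using hpo
  -- `bd` is a diameter of the circle, whose centre is `o + (k / n) • N`: the left side is
  -- orthogonal to `A - C`, `B - D` and `N`
  have hcenter : n • (B + D) - (2 * k) • N = 0 := by
    refine eq_zero_of_inner_eq_zero_of_finrank_eq_three hE (u := A - C) (v := B - D) (w := N)
      (by simpa [A, C, sub_eq_zero] using hac) (by simpa [B, D, sub_eq_zero] using hbd)
      (by simpa [n, N, sub_eq_zero] using hpo) ?_ ?_ ?_ ?_ ?_ ?_ <;>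
    simp only [inner_add_left, inner_sub_left, inner_sub_right,
      real_inner_smul_left, real_inner_comm A B, real_inner_comm A D,
      real_inner_comm C B, real_inner_comm C D, real_inner_comm B D, real_inner_comm A N,
      real_inner_comm B N, real_inner_comm C N, real_inner_comm D N, hAB, hAD, hCB, hCD,
      hBB, hDD, hAN, hBN, hCN, hDN] <;> ring
  have hA := congrArg (⟪A, ·⟫) hcenter
  have hB := congrArg (⟪B, ·⟫) hcenter
  simp only [inner_add_right, inner_sub_right, real_inner_smul_right, inner_zero_right,
    hAB, hAD, hAN, hBB, hBD, hBN] at hA hB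
  have : n * (dist b d ^ 2 - 2) = 0 := by linear_combination 2 * (hA - hB)
  have := (mul_eq_zero.mp this).resolve_left hn
  linarith

theorem exists_dist_ne_one_of_subset_sphere_inter_sphere [FiniteDimensional ℝ E]
    (hE : finrank ℝ E = 3) {o e : E} {r : ℝ} (he : e ∈ sphere o r) {T : Finset E}
    (hT : ↑T ⊆ sphere o r ∩ sphere e 1) (hcard : 3 < #T) :
    ∀ v ∈ T, ∃ w ∈ T, v ≠ w ∧ ¬dist v w = 1 := by
  classical
  intro v hv
  by_contra! h
  have := card_le_two_of_subset_three_spheres hE (s := T.erase v) he (hT hv).1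
    (by rw [dist_comm]; exact (hT hv).2) fun x hx => ⟨hT (mem_of_mem_erase hx), by
      rw [mem_sphere, dist_comm]; exact h x (mem_of_mem_erase hx) (ne_of_mem_erase hx).symm⟩
  rw [card_erase_of_mem hv] at this
  omega

end Geometry

theorem stmt_8_general (S : Finset (EuclideanSpace ℝ (Fin 3)))
    (hcard : S.card = 5)
    (hsphere : ∃ (c : EuclideanSpace ℝ (Fin 3)) (r : ℝ), ∀ x ∈ S, dist x c = r)
    (hdiam : ∀ x ∈ S, ∀ y ∈ S, dist x y ≤ 1) :
    unitPairs S ≤ 2 * 7 := by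
  classical
  obtain ⟨o, r, hS⟩ := hsphere
  have hR : Std.Symm fun x y : EuclideanSpace ℝ (Fin 3) => dist x y = 1 :=
    ⟨fun x y h => by rwa [dist_comm]⟩
  by_contra! hlt
  have hbad : #{q ∈ S.offDiag | ¬dist q.1 q.2 = 1} ≤ 4 := by
    have hsplit := card_filter_add_card_filter_not (s := S.offDiag) fun q => dist q.1 q.2 = 1
    obtain ⟨k, hk⟩ := even_card_offDiag_filter hR (T := S)
    rw [offDiag_card, hcard] at hsplit
    unfold unitPairs at hlt
    omega
  obtain ⟨e, he, hfull⟩ : ∃ e ∈ S, ∀ x ∈ S, e ≠ x → dist e x = 1 := by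
    by_contra! h
    have := (card_le_card_offDiag_filter_not h).trans hbad
    omega
  set T := S.erase e
  have hT : #T = 4 := by rw [card_erase_of_mem he, hcard]
  have hcircle : ↑T ⊆ sphere o r ∩ sphere e 1 := fun x hx =>
    ⟨hS x (mem_of_mem_erase hx), by
      rw [mem_sphere, dist_comm]; exact hfull x (mem_of_mem_erase hx) (ne_of_mem_erase hx).symm⟩
  have hpartner := exists_dist_ne_one_of_subset_sphere_inter_sphere finrank_euclideanSpace_fin
    (hS e he) hcircle (by omega)
  have hbadT : #{q ∈ T.offDiag | ¬dist q.1 q.2 = 1} ≤ #T :=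
    (card_le_card (filter_subset_filter _ (offDiag_mono (erase_subset e S)))).trans (hT ▸ hbad)
  obtain ⟨a, ha, b, hb, c, hc, d, hd, hac, hbd, hab, hbc, hcd, hda⟩ :=
    exists_four_cycle_of_card_offDiag_filter_not_le hR (by omega) hpartner hbadT
  have heo : e ≠ o := by
    rintro rfl
    simpa using (hS e he).trans ((hcircle ha).1.symm.trans (hcircle ha).2)
  have hdiag := dist_sq_eq_two_of_unit_rhombus_subset_circle finrank_euclideanSpace_fin heo
    (by
      simp only [Set.insert_subset_iff, Set.singleton_subset_iff]
      exact ⟨hcircle ha, hcircle hb, hcircle hc, hcircle hd⟩) hab hbc hcd hda hac hbd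
  nlinarith [hdiam b (mem_of_mem_erase hb) d (mem_of_mem_erase hd), dist_nonneg (x := b) (y := d)]

/-- Five points of diameter 1 on a 2-sphere in ℝ³ have at most 7 diameter pairs. -/
theorem stmt_8 (S : Finset (EuclideanSpace ℝ (Fin 3)))
    (hcard : S.card = 5)
    (hsphere : ∃ (c : EuclideanSpace ℝ (Fin 3)) (r : ℝ), ∀ x ∈ S, dist x c = r)
    (hdiam : ∀ x ∈ S, ∀ y ∈ S, dist x y ≤ 1)
    (hattain : ∃ x ∈ S, ∃ y ∈ S, dist x y = 1) :
    unitPairs S ≤ 2 * 7 :=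
  stmt_8_general S hcard hsphere hdiam
end

section
/- Let S be a finite set of n points of diameter 1 lying on a 2-sphere in ℝ³ of radius r ≥ 1/√2. Then the number of unordered pairs of points of S at distance exactly 1 is at most n. -/
set_option maxHeartbeats 1000000

open RealInnerProductSpace Classical

local notation "E3" => EuclideanSpace ℝ (Fin 3)


private lemma inner_self_pos' {x : E3} (hx : x ≠ 0) : 0 < ⟪x, x⟫ := by
  rcases lt_or_eq_of_le (real_inner_self_nonneg (x := x)) with h | h
  · exact h
  · exact absurd (inner_self_eq_zero.mp h.symm) hx

private lemma coeff_zero {x y ρ2 g : ℝ} (hρ : 0 < ρ2) (hg0 : 0 ≤ g) (hg : g < ρ2)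
    (e1 : x * ρ2 + y * g = 0) (e2 : x * g + y * ρ2 = 0) : x = 0 ∧ y = 0 := by
  have hx : x * (ρ2 * ρ2 - g * g) = 0 := by linear_combination ρ2 * e1 - g * e2
  have h1 : 0 < ρ2 * ρ2 - g * g := by nlinarith
  have hx0 : x = 0 := by
    rcases mul_eq_zero.mp hx with h | h
    · exact h
    · nlinarith
  refine ⟨hx0, ?_⟩
  have h2 : y * ρ2 = 0 := by rw [hx0] at e2; linarith
  rcases mul_eq_zero.mp h2 with h | h
  · exact h
  · exact absurd h (ne_of_gt hρ)

private lemma extract {a b c : ℝ} {p q s : E3} (h : a • p + b • q + c • s = 0)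
    (ha : 0 < a) (hb : 0 < b) (hc : c < 0) :
    ∃ l m : ℝ, 0 < l ∧ 0 < m ∧ s = l • p + m • q := by
  have hc0 : (-c) ≠ 0 := ne_of_gt (by linarith)
  refine ⟨a / (-c), b / (-c), div_pos ha (by linarith), div_pos hb (by linarith), ?_⟩
  apply smul_right_injective E3 hc0
  show (-c) • s = (-c) • ((a / (-c)) • p + (b / (-c)) • q)
  have h1 : a • p + b • q = (-c) • s := by
    rw [neg_smul]
    exact eq_neg_of_add_eq_zero_left h
  rw [← h1, smul_add, smul_smul, smul_smul]
  rw [mul_div_cancel₀ _ hc0, mul_div_cancel₀ _ hc0]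

private lemma exists_relation (a b c d : E3) :
    ∃ x y z w : ℝ, x • a + y • b + z • c + w • d = 0 ∧ (x ≠ 0 ∨ y ≠ 0 ∨ z ≠ 0 ∨ w ≠ 0) := by
  have hni : ¬ LinearIndependent ℝ ![a, b, c, d] := by
    intro h
    have := h.fintype_card_le_finrank
    simp [finrank_euclideanSpace_fin] at this
  obtain ⟨g, hg, i, hi⟩ := Fintype.not_linearIndependent_iff.mp hni
  refine ⟨g 0, g 1, g 2, g 3, ?_, ?_⟩
  · simpa [Fin.sum_univ_four] using hg
  · fin_cases i
    · exact Or.inl hi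
    · exact Or.inr (Or.inl hi)
    · exact Or.inr (Or.inr (Or.inl hi))
    · exact Or.inr (Or.inr (Or.inr hi))

private lemma exists_middle (p1 p2 p3 u0 : E3) (ρ2 R : ℝ) (hρ : 0 < ρ2) (hR : 0 < R)
    (huu : ⟪u0, u0⟫ = R)
    (h1u : ⟪p1, u0⟫ = 0) (h2u : ⟪p2, u0⟫ = 0) (h3u : ⟪p3, u0⟫ = 0)
    (h11 : ⟪p1, p1⟫ = ρ2) (h22 : ⟪p2, p2⟫ = ρ2) (h33 : ⟪p3, p3⟫ = ρ2)
    (h12 : 0 ≤ ⟪p1, p2⟫) (h13 : 0 ≤ ⟪p1, p3⟫) (h23 : 0 ≤ ⟪p2, p3⟫)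
    (h12' : ⟪p1, p2⟫ < ρ2) (h13' : ⟪p1, p3⟫ < ρ2) (h23' : ⟪p2, p3⟫ < ρ2) :
    ∃ l m : ℝ, 0 < l ∧ 0 < m ∧
      (p1 = l • p2 + m • p3 ∨ p2 = l • p1 + m • p3 ∨ p3 = l • p1 + m • p2) := by
  obtain ⟨x, y, z, w, hrel, hne⟩ := exists_relation p1 p2 p3 u0
  -- kill the u0 coefficient
  have hw0 : w = 0 := by
    have h0 := congrArg (fun v => ⟪v, u0⟫) hrel
    simp only [inner_add_left, real_inner_smul_left, h1u, h2u, h3u, huu,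
      inner_zero_left, mul_zero, zero_add, add_zero] at h0
    rcases mul_eq_zero.mp h0 with h | h
    · exact h
    · exact absurd h (ne_of_gt hR)
  rw [hw0, zero_smul, add_zero] at hrel
  have hne' : x ≠ 0 ∨ y ≠ 0 ∨ z ≠ 0 := by
    rcases hne with h | h | h | h
    · exact Or.inl h
    · exact Or.inr (Or.inl h)
    · exact Or.inr (Or.inr h)
    · exact absurd hw0 h
  -- inner product equations
  have c21 : ⟪p2, p1⟫ = ⟪p1, p2⟫ := real_inner_comm _ _
  have c31 : ⟪p3, p1⟫ = ⟪p1, p3⟫ := real_inner_comm _ _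
  have c32 : ⟪p3, p2⟫ = ⟪p2, p3⟫ := real_inner_comm _ _
  have E1 : x * ρ2 + y * ⟪p1, p2⟫ + z * ⟪p1, p3⟫ = 0 := by
    have h0 := congrArg (fun v => ⟪v, p1⟫) hrel
    simp only [inner_add_left, real_inner_smul_left, h11, c21, c31, inner_zero_left] at h0
    linarith
  have E2 : x * ⟪p1, p2⟫ + y * ρ2 + z * ⟪p2, p3⟫ = 0 := by
    have h0 := congrArg (fun v => ⟪v, p2⟫) hrel
    simp only [inner_add_left, real_inner_smul_left, h22, c32, inner_zero_left] at h0
    linarith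
  have E3' : x * ⟪p1, p3⟫ + y * ⟪p2, p3⟫ + z * ρ2 = 0 := by
    have h0 := congrArg (fun v => ⟪v, p3⟫) hrel
    simp only [inner_add_left, real_inner_smul_left, h33, inner_zero_left] at h0
    linarith
  -- all three coefficients are nonzero
  have hx : x ≠ 0 := by
    intro h0
    rw [h0] at E2 E3'
    obtain ⟨hy, hz⟩ := coeff_zero (x := y) (y := z) (g := ⟪p2, p3⟫) hρ h23 h23' (by linarith) (by linarith)
    rcases hne' with h | h | h
    · exact h h0
    · exact h hy
    · exact h hz
  have hy : y ≠ 0 := by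
    intro h0
    rw [h0] at E1 E3'
    obtain ⟨hx', hz⟩ := coeff_zero (x := x) (y := z) (g := ⟪p1, p3⟫) hρ h13 h13' (by linarith) (by linarith)
    exact hx hx'
  have hz : z ≠ 0 := by
    intro h0
    rw [h0] at E1 E2
    obtain ⟨hx', hy'⟩ := coeff_zero (x := x) (y := y) (g := ⟪p1, p2⟫) hρ h12 h12' (by linarith) (by linarith)
    exact hx hx'
  -- sign case analysis
  rcases hx.lt_or_gt with hxn | hxp <;> rcases hy.lt_or_gt with hyn | hyp <;>
    rcases hz.lt_or_gt with hzn | hzp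
  · -- all negative: contradiction from E1
    nlinarith [mul_pos (neg_pos.mpr hxn) hρ, mul_nonneg (neg_nonneg.mpr hyn.le) h12,
      mul_nonneg (neg_nonneg.mpr hzn.le) h13]
  · -- x<0, y<0, z>0 : minority z : p3
    have hrel2 : (-x) • p1 + (-y) • p2 + (-z) • p3 = 0 := by
      have : (-x) • p1 + (-y) • p2 + (-z) • p3 = -(x • p1 + y • p2 + z • p3) := by module
      rw [this, hrel, neg_zero]
    obtain ⟨l, m, hl, hm, he⟩ := extract hrel2 (by linarith) (by linarith) (by linarith)
    exact ⟨l, m, hl, hm, Or.inr (Or.inr he)⟩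
  · -- x<0, y>0, z<0 : minority y : p2
    have hrel2 : (-x) • p1 + (-z) • p3 + (-y) • p2 = 0 := by
      have : (-x) • p1 + (-z) • p3 + (-y) • p2 = -(x • p1 + y • p2 + z • p3) := by module
      rw [this, hrel, neg_zero]
    obtain ⟨l, m, hl, hm, he⟩ := extract hrel2 (by linarith) (by linarith) (by linarith)
    exact ⟨l, m, hl, hm, Or.inr (Or.inl he)⟩
  · -- x<0, y>0, z>0 : minority x : p1
    have hrel2 : y • p2 + z • p3 + x • p1 = 0 := by
      have : y • p2 + z • p3 + x • p1 = x • p1 + y • p2 + z • p3 := by module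
      rw [this, hrel]
    obtain ⟨l, m, hl, hm, he⟩ := extract hrel2 hyp hzp hxn
    exact ⟨l, m, hl, hm, Or.inl he⟩
  · -- x>0, y<0, z<0 : minority x : p1
    have hrel2 : (-y) • p2 + (-z) • p3 + (-x) • p1 = 0 := by
      have : (-y) • p2 + (-z) • p3 + (-x) • p1 = -(x • p1 + y • p2 + z • p3) := by module
      rw [this, hrel, neg_zero]
    obtain ⟨l, m, hl, hm, he⟩ := extract hrel2 (by linarith) (by linarith) (by linarith)
    exact ⟨l, m, hl, hm, Or.inl he⟩
  · -- x>0, y<0, z>0 : minority y : p2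
    have hrel2 : x • p1 + z • p3 + y • p2 = 0 := by
      have : x • p1 + z • p3 + y • p2 = x • p1 + y • p2 + z • p3 := by module
      rw [this, hrel]
    obtain ⟨l, m, hl, hm, he⟩ := extract hrel2 hxp hzp hyn
    exact ⟨l, m, hl, hm, Or.inr (Or.inl he)⟩
  · -- x>0, y>0, z<0 : minority z : p3
    obtain ⟨l, m, hl, hm, he⟩ := extract hrel hxp hyp hzn
    exact ⟨l, m, hl, hm, Or.inr (Or.inr he)⟩
  · -- all positive: contradiction from E1
    nlinarith [mul_pos hxp hρ, mul_nonneg hyp.le h12, mul_nonneg hzp.le h13]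

private lemma middle_only_neighbor
    (U VA VB VD W : E3) (r2 t s : ℝ)
    (hr2 : 0 < r2) (ht : 0 ≤ t) (htr : t < r2)
    (hsr : s * r2 = t)
    (hu : ⟪U, U⟫ = r2) (hva : ⟪VA, VA⟫ = r2) (hvb : ⟪VB, VB⟫ = r2)
    (hvd : ⟪VD, VD⟫ = r2) (hw : ⟪W, W⟫ = r2)
    (huva : ⟪U, VA⟫ = t) (huvb : ⟪U, VB⟫ = t) (huvd : ⟪U, VD⟫ = t)
    (hbd : VB ≠ VD)
    (hGbd : t ≤ ⟪VB, VD⟫)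
    (l m : ℝ) (hl : 0 < l) (hm : 0 < m)
    (hmid : VA - s • U = l • (VB - s • U) + m • (VD - s • U))
    (hwu : t ≤ ⟪W, U⟫) (hwb : t ≤ ⟪W, VB⟫) (hwd : t ≤ ⟪W, VD⟫)
    (hwa : ⟪W, VA⟫ = t)
    (hwne : W ≠ U) : False := by
  have hs0 : 0 ≤ s := by nlinarith only [hsr, ht, hr2]
  have cva : ⟪VA, U⟫ = t := by rw [real_inner_comm]; exact huva
  have cvb : ⟪VB, U⟫ = t := by rw [real_inner_comm]; exact huvb
  have cvd : ⟪VD, U⟫ = t := by rw [real_inner_comm]; exact huvd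
  have cG : ⟪VD, VB⟫ = ⟪VB, VD⟫ := real_inner_comm _ _
  have hGlt : ⟪VB, VD⟫ < r2 := by
    have hpos := inner_self_pos' (sub_ne_zero.mpr hbd)
    simp only [inner_sub_left, inner_sub_right] at hpos
    rw [hvb, hvd, cG] at hpos
    linarith
  have e0 : s * t * r2 = t * t := by linear_combination t * hsr
  have hρ : 0 < r2 - s * t := by
    nlinarith only [e0, ht, htr, hr2, mul_pos (sub_pos.mpr htr) (show (0:ℝ) < r2 + t by linarith)]
  have hnorm := congrArg (fun v => ⟪v, v⟫) hmid
  simp only [inner_sub_left, inner_sub_right, inner_add_left, inner_add_right,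
    real_inner_smul_left, real_inner_smul_right, hu, hva, hvb, hvd, huva, huvb, huvd,
    cva, cvb, cvd, cG] at hnorm
  have hnorm' : r2 - s*t = (l*l + m*m) * (r2 - s*t) + 2*(l*m)*(⟪VB, VD⟫ - s*t) := by
    linear_combination hnorm + (s*(l+m)^2 - s) * hsr
  have h2' : ((l+m)^2 - 1) * (r2 - s*t) = 2*(l*m)*((r2 - s*t) - (⟪VB, VD⟫ - s*t)) := by
    linear_combination (-1 : ℝ) * hnorm'
  have hD : (0:ℝ) < 2*(l*m)*((r2 - s*t) - (⟪VB, VD⟫ - s*t)) :=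
    mul_pos (by positivity) (by linarith)
  have h3 : 0 < (l+m)^2 - 1 := by nlinarith only [h2', hD, hρ]
  have hlm : 1 < l + m := by
    nlinarith only [h3, hl, hm, show (0:ℝ) < 1 + (l+m) by linarith]
  have cwu : ⟪U, W⟫ = ⟪W, U⟫ := real_inner_comm _ _
  have hg2 : ⟪W, U⟫ < r2 := by
    have hpos := inner_self_pos' (sub_ne_zero.mpr hwne)
    simp only [inner_sub_left, inner_sub_right] at hpos
    rw [hw, hu, cwu] at hpos
    linarith
  have EA := congrArg (fun v => ⟪W, v⟫) hmid
  simp only [inner_sub_right, inner_add_right, real_inner_smul_right, hwa] at EA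
  have hh1 : t - s * ⟪W, U⟫ ≤ 0 := by
    nlinarith only [EA, hlm, mul_nonneg hl.le (sub_nonneg.mpr hwb),
      mul_nonneg hm.le (sub_nonneg.mpr hwd)]
  have hkey : (t - s * ⟪W, U⟫) * r2 = t * (r2 - ⟪W, U⟫) := by linear_combination (-⟪W, U⟫) * hsr
  have hh2 : 0 ≤ t - s * ⟪W, U⟫ := by
    nlinarith only [hkey, hr2, mul_nonneg ht (show (0:ℝ) ≤ r2 - ⟪W, U⟫ by linarith)]
  have hh : t - s * ⟪W, U⟫ = 0 := le_antisymm hh1 hh2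
  have ht0 : t = 0 := by
    have h1 : t * (r2 - ⟪W, U⟫) = 0 := by rw [← hkey, hh, zero_mul]
    rcases mul_eq_zero.mp h1 with h | h
    · exact h
    · linarith
  have hs00 : s = 0 := by
    rcases mul_eq_zero.mp (by rw [hsr, ht0] : s * r2 = 0) with h | h
    · exact h
    · linarith
  rw [hs00, zero_smul, sub_zero, sub_zero, sub_zero] at hmid
  rw [ht0] at hwu hwb hwd hwa hGbd huvb huvd
  have EA2 := congrArg (fun v => ⟪W, v⟫) hmid
  simp only [inner_add_right, real_inner_smul_right, hwa] at EA2
  -- EA2 : 0 = l * ⟪W, VB⟫ + m * ⟪W, VD⟫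
  have hb0 : ⟪W, VB⟫ = 0 := by
    refine le_antisymm ?_ hwb
    nlinarith only [EA2, mul_nonneg hm.le hwd, hl]
  have hd0 : ⟪W, VD⟫ = 0 := by
    refine le_antisymm ?_ hwd
    nlinarith only [EA2, mul_nonneg hl.le hwb, hm]
  -- final linear relation
  obtain ⟨x, y, z, w', hrel, hne⟩ := exists_relation W U VB VD
  have cb : ⟪VB, W⟫ = 0 := by rw [real_inner_comm]; exact hb0
  have cd : ⟪VD, W⟫ = 0 := by rw [real_inner_comm]; exact hd0
  have e1 : z * r2 + w' * ⟪VB, VD⟫ = 0 := by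
    have h0 := congrArg (fun v => ⟪v, VB⟫) hrel
    simp only [inner_add_left, real_inner_smul_left, hb0, huvb, hvb, cG, inner_zero_left,
      mul_zero, zero_add, add_zero] at h0
    linarith
  have e2 : z * ⟪VB, VD⟫ + w' * r2 = 0 := by
    have h0 := congrArg (fun v => ⟪v, VD⟫) hrel
    simp only [inner_add_left, real_inner_smul_left, hd0, huvd, hvd, inner_zero_left,
      mul_zero, zero_add, add_zero] at h0
    linarith
  obtain ⟨hz0, hw0'⟩ := coeff_zero (x := z) (y := w') (g := ⟪VB, VD⟫) hr2 hGbd hGlt e1 e2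
  have e3 : x * r2 + y * ⟪W, U⟫ = 0 := by
    have h0 := congrArg (fun v => ⟪v, W⟫) hrel
    simp only [inner_add_left, real_inner_smul_left, hw, cwu, cb, cd, hz0, hw0',
      inner_zero_left, mul_zero, zero_add, add_zero, zero_mul] at h0
    linarith
  have e4 : x * ⟪W, U⟫ + y * r2 = 0 := by
    have h0 := congrArg (fun v => ⟪v, U⟫) hrel
    simp only [inner_add_left, real_inner_smul_left, hu, cvb, cvd, ht0, hz0, hw0',
      inner_zero_left, mul_zero, zero_add, add_zero, zero_mul] at h0
    linarith
  obtain ⟨hx0, hy0⟩ := coeff_zero (x := x) (y := y) (g := ⟪W, U⟫) hr2 hwu hg2 e3 e4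
  rcases hne with h | h | h | h
  · exact h hx0
  · exact h hy0
  · exact h hz0
  · exact h hw0'

private lemma unitPairs_eq_sum {d : ℕ} (S : Finset (EuclideanSpace ℝ (Fin d))) :
    unitPairs S = ∑ x ∈ S, (S.filter fun y => x ≠ y ∧ dist x y = 1).card := by
  classical
  rw [unitPairs]
  rw [Finset.card_eq_sum_card_fiberwise
    (f := Prod.fst) (t := S)
    (fun p hp => (Finset.mem_offDiag.mp (Finset.mem_filter.mp hp).1).1)]
  refine Finset.sum_congr rfl fun x hx => ?_
  refine Finset.card_bij' (fun p _ => p.2) (fun y _ => (x, y)) ?_ ?_ ?_ ?_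
  · intro p hp
    simp only [Finset.mem_filter, Finset.mem_offDiag] at hp
    obtain ⟨⟨⟨h1, h2, h3⟩, h4⟩, h5⟩ := hp
    subst h5
    simp only [Finset.mem_filter]
    exact ⟨h2, h3, h4⟩
  · intro y hy
    simp only [Finset.mem_filter] at hy
    simp only [Finset.mem_filter, Finset.mem_offDiag]
    exact ⟨⟨⟨hx, hy.1, hy.2.1⟩, hy.2.2⟩, by trivial⟩
  · intro p hp
    simp only [Finset.mem_filter] at hp
    obtain ⟨p1, p2⟩ := p
    obtain ⟨-, h2⟩ := hp
    simp only at h2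
    subst h2
    rfl
  · intro y hy
    rfl

private lemma unitPairs_erase {d : ℕ} (S : Finset (EuclideanSpace ℝ (Fin d))) (v)
    (hv : v ∈ S) :
    unitPairs S = unitPairs (S.erase v) + 2 * (S.filter fun y => v ≠ y ∧ dist v y = 1).card := by
  classical
  rw [unitPairs_eq_sum, unitPairs_eq_sum]
  rw [← Finset.add_sum_erase _ _ hv]
  have step : ∀ x ∈ S.erase v,
      (S.filter fun y => x ≠ y ∧ dist x y = 1).card
        = ((S.erase v).filter fun y => x ≠ y ∧ dist x y = 1).card
          + if (x ≠ v ∧ dist x v = 1) then 1 else 0 := by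
    intro x hx
    conv_lhs => rw [← Finset.insert_erase hv]
    rw [Finset.filter_insert]
    split_ifs with h
    · rw [Finset.card_insert_of_notMem (fun hmem => (Finset.mem_erase.mp
        (Finset.mem_of_mem_filter v hmem)).1 rfl)]
    · rfl
  rw [Finset.sum_congr rfl step, Finset.sum_add_distrib]
  have hcount : (∑ x ∈ S.erase v, if (x ≠ v ∧ dist x v = 1) then 1 else 0)
      = (S.filter fun y => v ≠ y ∧ dist v y = 1).card := by
    have hsets : (S.erase v).filter (fun x => x ≠ v ∧ dist x v = 1)
        = S.filter (fun y => v ≠ y ∧ dist v y = 1) := by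
      ext y
      simp only [Finset.mem_filter, Finset.mem_erase]
      constructor
      · rintro ⟨⟨hyv, hyS⟩, -, hd⟩
        exact ⟨hyS, Ne.symm hyv, by rwa [dist_comm]⟩
      · rintro ⟨hyS, hvy, hd⟩
        exact ⟨⟨Ne.symm hvy, hyS⟩, Ne.symm hvy, by rwa [dist_comm]⟩
    rw [Finset.sum_boole, hsets, Nat.cast_id]
  rw [hcount]
  ring

private lemma dist_sq_eq (x y c : E3) (r : ℝ) (hx : dist x c = r) (hy : dist y c = r) :
    dist x y ^ 2 = 2 * r ^ 2 - 2 * ⟪x - c, y - c⟫ := by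
  have hx' : ‖x - c‖ = r := by rw [← dist_eq_norm]; exact hx
  have hy' : ‖y - c‖ = r := by rw [← dist_eq_norm]; exact hy
  have h1 : dist x y = ‖(x - c) - (y - c)‖ := by rw [sub_sub_sub_cancel_right, dist_eq_norm]
  rw [h1, norm_sub_sq_real, hx', hy']
  ring

private lemma proj_inner (X Y U : E3) (s r2 tx ty G : ℝ)
    (hU : ⟪U, U⟫ = r2) (hx : ⟪U, X⟫ = tx) (hy : ⟪U, Y⟫ = ty) (hG : ⟪X, Y⟫ = G) :
    ⟪X - s • U, Y - s • U⟫ = G - s * ty - s * tx + s * s * r2 := by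
  have cx : ⟪X, U⟫ = tx := by rw [real_inner_comm]; exact hx
  simp only [inner_sub_left, inner_sub_right, real_inner_smul_left, real_inner_smul_right,
    hU, hx, hy, hG, cx]
  ring

private lemma proj_orth (X U : E3) (s r2 tx : ℝ)
    (hU : ⟪U, U⟫ = r2) (hx : ⟪U, X⟫ = tx) (hs : s * r2 = tx) :
    ⟪X - s • U, U⟫ = 0 := by
  have cx : ⟪X, U⟫ = tx := by rw [real_inner_comm]; exact hx
  rw [inner_sub_left, real_inner_smul_left, cx, hU, hs, sub_self]

private lemma key : ∀ (n : ℕ) (S : Finset E3) (c : E3) (r : ℝ), 1 / Real.sqrt 2 ≤ r →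
    (∀ x ∈ S, dist x c = r) → (∀ x ∈ S, ∀ y ∈ S, dist x y ≤ 1) → S.card = n →
    unitPairs S ≤ 2 * n := by
  intro n
  induction n using Nat.strong_induction_on with
  | _ n IH =>
  intro S c r hr hsph hdiam hcard
  have hrpos : 0 < r := lt_of_lt_of_le (by positivity) hr
  have hr2pos : 0 < r ^ 2 := by positivity
  have hr2 : (1:ℝ) / 2 ≤ r ^ 2 := by
    have h2 : (1 / Real.sqrt 2) ^ 2 = 1 / 2 := by
      rw [div_pow, one_pow, Real.sq_sqrt (by norm_num : (0:ℝ) ≤ 2)]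
    calc (1:ℝ)/2 = (1 / Real.sqrt 2) ^ 2 := h2.symm
    _ ≤ r ^ 2 := pow_le_pow_left₀ (by positivity) hr 2
  obtain ⟨t, htdef⟩ : ∃ t : ℝ, t = r ^ 2 - 1 / 2 := ⟨_, rfl⟩
  have ht : 0 ≤ t := by rw [htdef]; linarith
  have htr : t < r ^ 2 := by rw [htdef]; linarith
  obtain ⟨s, hsr, hs0, hs1⟩ : ∃ s : ℝ, s * r ^ 2 = t ∧ 0 ≤ s ∧ s < 1 := by
    refine ⟨t / r ^ 2, div_mul_cancel₀ t (ne_of_gt hr2pos), div_nonneg ht hr2pos.le, ?_⟩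
    rw [div_lt_one hr2pos]; exact htr
  -- inner product characterizations
  have hself : ∀ x ∈ S, ⟪x - c, x - c⟫ = r ^ 2 := by
    intro x hx
    rw [real_inner_self_eq_norm_sq, ← dist_eq_norm, hsph x hx]
  have hinner_ge : ∀ x ∈ S, ∀ y ∈ S, t ≤ ⟪x - c, y - c⟫ := by
    intro x hx y hy
    have hsq := dist_sq_eq x y c r (hsph x hx) (hsph y hy)
    have h1 : dist x y ^ 2 ≤ 1 := by
      nlinarith only [hdiam x hx y hy, dist_nonneg (x := x) (y := y)]
    linarith [htdef]
  have hinner_iff : ∀ x ∈ S, ∀ y ∈ S, (dist x y = 1 ↔ ⟪x - c, y - c⟫ = t) := by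
    intro x hx y hy
    have hsq := dist_sq_eq x y c r (hsph x hx) (hsph y hy)
    constructor
    · intro h
      rw [h] at hsq
      rw [htdef]; linarith
    · intro h
      rw [h, htdef] at hsq
      have h1 : dist x y ^ 2 = 1 := by linarith
      have h2 : (dist x y - 1) * (dist x y + 1) = 0 := by linear_combination h1
      rcases mul_eq_zero.mp h2 with h3 | h3
      · linarith
      · exfalso; linarith [dist_nonneg (x := x) (y := y)]
  have hltr2 : ∀ x ∈ S, ∀ y ∈ S, x ≠ y → ⟪x - c, y - c⟫ < r ^ 2 := by
    intro x hx y hy hne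
    have hpos := inner_self_pos' (x := (x - c) - (y - c))
      (by rw [sub_sub_sub_cancel_right]; exact sub_ne_zero.mpr hne)
    have hc : ⟪y - c, x - c⟫ = ⟪x - c, y - c⟫ := real_inner_comm _ _
    rw [inner_sub_sub_self, hself x hx, hself y hy, hc] at hpos
    linarith
  by_cases hdeg : ∀ x ∈ S, (S.filter fun y => x ≠ y ∧ dist x y = 1).card ≤ 2
  · rw [unitPairs_eq_sum]
    calc ∑ x ∈ S, (S.filter fun y => x ≠ y ∧ dist x y = 1).card
        ≤ ∑ _x ∈ S, 2 := Finset.sum_le_sum hdeg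
    _ = 2 * n := by rw [Finset.sum_const, smul_eq_mul, hcard, mul_comm]
  · push_neg at hdeg
    obtain ⟨u, hu, hdu⟩ := hdeg
    -- the common finishing argument, given a middle vertex va between vb and vd
    have main : ∀ va vb vd : E3, va ∈ S → vb ∈ S → vd ∈ S →
        ⟪u - c, va - c⟫ = t → ⟪u - c, vb - c⟫ = t → ⟪u - c, vd - c⟫ = t → vb ≠ vd →
        ∀ l m : ℝ, 0 < l → 0 < m →
        ((va - c) - s • (u - c) = l • ((vb - c) - s • (u - c)) + m • ((vd - c) - s • (u - c))) →
        unitPairs S ≤ 2 * n := by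
      intro va vb vd hva hvb hvd hIa hIb hId hbd l m hl hm hmid
      have hvau : va ≠ u := by
        intro h
        rw [h] at hIa
        rw [hself u hu] at hIa
        linarith
      have hdau : dist va u = 1 := by
        rw [dist_comm]
        exact (hinner_iff u hu va hva).mpr hIa
      have hfilter : S.filter (fun y => va ≠ y ∧ dist va y = 1) = {u} := by
        ext w
        simp only [Finset.mem_filter, Finset.mem_singleton]
        constructor
        · rintro ⟨hwS, hnw, hdw⟩
          by_contra hwu
          exact middle_only_neighbor (u - c) (va - c) (vb - c) (vd - c) (w - c) (r ^ 2) t s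
            hr2pos ht htr hsr
            (hself u hu) (hself va hva) (hself vb hvb) (hself vd hvd) (hself w hwS)
            hIa hIb hId
            (fun h => hbd (by
              have := congrArg (fun z => z + c) h
              simpa using this))
            (hinner_ge vb hvb vd hvd)
            l m hl hm hmid
            (hinner_ge w hwS u hu) (hinner_ge w hwS vb hvb) (hinner_ge w hwS vd hvd)
            ((hinner_iff w hwS va hva).mp (by rwa [dist_comm]))
            (fun h => hwu (by
              have := congrArg (fun z => z + c) h
              simpa using this))
        · intro h
          subst h
          exact ⟨hu, hvau, hdau⟩
      have hdeg1 : (S.filter fun y => va ≠ y ∧ dist va y = 1).card = 1 := by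
        rw [hfilter, Finset.card_singleton]
      have hn1 : 1 ≤ n := by
        rw [← hcard]
        exact Finset.card_pos.mpr ⟨va, hva⟩
      have hcard' : (S.erase va).card = n - 1 := by
        rw [Finset.card_erase_of_mem hva, hcard]
      have hIH := IH (n - 1) (by omega) (S.erase va) c r hr
        (fun x hx => hsph x (Finset.mem_of_mem_erase hx))
        (fun x hx y hy => hdiam x (Finset.mem_of_mem_erase hx) y (Finset.mem_of_mem_erase hy))
        hcard'
      rw [unitPairs_erase S va hva, hdeg1]
      omega
    -- extract three distinct neighbors of u
    have hF3 : 2 < (S.filter (fun y => u ≠ y ∧ dist u y = 1)).card := hdu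
    obtain ⟨v1, hv1F⟩ := Finset.card_pos.mp (by omega :
      0 < (S.filter (fun y => u ≠ y ∧ dist u y = 1)).card)
    obtain ⟨v2, hv2e⟩ := Finset.card_pos.mp (by
      rw [Finset.card_erase_of_mem hv1F]; omega :
      0 < ((S.filter (fun y => u ≠ y ∧ dist u y = 1)).erase v1).card)
    obtain ⟨v3, hv3e⟩ := Finset.card_pos.mp (by
      rw [Finset.card_erase_of_mem hv2e, Finset.card_erase_of_mem hv1F]; omega :
      0 < (((S.filter (fun y => u ≠ y ∧ dist u y = 1)).erase v1).erase v2).card)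
    have hv2F := Finset.mem_of_mem_erase hv2e
    have hv3F := Finset.mem_of_mem_erase (Finset.mem_of_mem_erase hv3e)
    have h21 : v2 ≠ v1 := (Finset.mem_erase.mp hv2e).1
    have h32 : v3 ≠ v2 := (Finset.mem_erase.mp hv3e).1
    have h31 : v3 ≠ v1 := (Finset.mem_erase.mp (Finset.mem_of_mem_erase hv3e)).1
    obtain ⟨hv1S, -, hd1⟩ := Finset.mem_filter.mp hv1F
    obtain ⟨hv2S, -, hd2⟩ := Finset.mem_filter.mp hv2F
    obtain ⟨hv3S, -, hd3⟩ := Finset.mem_filter.mp hv3F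
    have hI1 : ⟪u - c, v1 - c⟫ = t := (hinner_iff u hu v1 hv1S).mp hd1
    have hI2 : ⟪u - c, v2 - c⟫ = t := (hinner_iff u hu v2 hv2S).mp hd2
    have hI3 : ⟪u - c, v3 - c⟫ = t := (hinner_iff u hu v3 hv3S).mp hd3
    -- tangent-space geometry
    have hUU := hself u hu
    have hPU1 := proj_orth (v1 - c) (u - c) s (r ^ 2) t hUU hI1 hsr
    have hPU2 := proj_orth (v2 - c) (u - c) s (r ^ 2) t hUU hI2 hsr
    have hPU3 := proj_orth (v3 - c) (u - c) s (r ^ 2) t hUU hI3 hsr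
    have hst : s * t < r ^ 2 := by nlinarith only [hs0, hs1, htr, ht, hr2pos]
    have hρ : 0 < r ^ 2 - s * t := by linarith
    have hPii : ∀ v, v ∈ S → ⟪u - c, v - c⟫ = t →
        ⟪(v - c) - s • (u - c), (v - c) - s • (u - c)⟫ = r ^ 2 - s * t := by
      intro v hv hI
      rw [proj_inner (v - c) (v - c) (u - c) s (r ^ 2) t t (⟪v - c, v - c⟫) hUU hI hI rfl]
      rw [hself v hv]
      linear_combination s * hsr
    have hPij : ∀ v v', v ∈ S → v' ∈ S → ⟪u - c, v - c⟫ = t → ⟪u - c, v' - c⟫ = t →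
        ⟪(v - c) - s • (u - c), (v' - c) - s • (u - c)⟫ = ⟪v - c, v' - c⟫ - s * t := by
      intro v v' hv hv' hI hI'
      rw [proj_inner (v - c) (v' - c) (u - c) s (r ^ 2) t t (⟪v - c, v' - c⟫) hUU hI hI' rfl]
      linear_combination s * hsr
    have hnn : ∀ v v', v ∈ S → v' ∈ S → t ≤ ⟪v - c, v' - c⟫ → 0 ≤ ⟪v - c, v' - c⟫ - s * t := by
      intro v v' hv hv' hge
      nlinarith only [hge, hs0, hs1, ht]
    have hlt : ∀ v v', v ∈ S → v' ∈ S → v ≠ v' → ⟪v - c, v' - c⟫ - s * t < r ^ 2 - s * t := by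
      intro v v' hv hv' hne
      have := hltr2 v hv v' hv' hne
      linarith
    obtain ⟨l, m, hl, hm, hcase⟩ := exists_middle
      ((v1 - c) - s • (u - c)) ((v2 - c) - s • (u - c)) ((v3 - c) - s • (u - c)) (u - c)
      (r ^ 2 - s * t) (r ^ 2) hρ hr2pos hUU hPU1 hPU2 hPU3
      (hPii v1 hv1S hI1) (hPii v2 hv2S hI2) (hPii v3 hv3S hI3)
      (by rw [hPij v1 v2 hv1S hv2S hI1 hI2]
          exact hnn v1 v2 hv1S hv2S (hinner_ge v1 hv1S v2 hv2S))
      (by rw [hPij v1 v3 hv1S hv3S hI1 hI3]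
          exact hnn v1 v3 hv1S hv3S (hinner_ge v1 hv1S v3 hv3S))
      (by rw [hPij v2 v3 hv2S hv3S hI2 hI3]
          exact hnn v2 v3 hv2S hv3S (hinner_ge v2 hv2S v3 hv3S))
      (by rw [hPij v1 v2 hv1S hv2S hI1 hI2]
          exact hlt v1 v2 hv1S hv2S (Ne.symm h21))
      (by rw [hPij v1 v3 hv1S hv3S hI1 hI3]
          exact hlt v1 v3 hv1S hv3S (Ne.symm h31))
      (by rw [hPij v2 v3 hv2S hv3S hI2 hI3]
          exact hlt v2 v3 hv2S hv3S (Ne.symm h32))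
    rcases hcase with hmid | hmid | hmid
    · exact main v1 v2 v3 hv1S hv2S hv3S hI1 hI2 hI3 (Ne.symm h32) l m hl hm hmid
    · exact main v2 v1 v3 hv2S hv1S hv3S hI2 hI1 hI3 (Ne.symm h31) l m hl hm hmid
    · exact main v3 v1 v2 hv3S hv1S hv2S hI3 hI1 hI2 (Ne.symm h21) l m hl hm hmid


/-- `n` points of diameter 1 on a sphere of radius at least `1/√2` in ℝ³ have at
most `n` diameter pairs. -/
theorem stmt_9 (n : ℕ) (S : Finset (EuclideanSpace ℝ (Fin 3)))
    (c : EuclideanSpace ℝ (Fin 3)) (r : ℝ) (hr : 1 / Real.sqrt 2 ≤ r)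
    (hcard : S.card = n)
    (hsphere : ∀ x ∈ S, dist x c = r)
    (hdiam : ∀ x ∈ S, ∀ y ∈ S, dist x y ≤ 1)
    (hattain : ∃ x ∈ S, ∃ y ∈ S, dist x y = 1) :
    unitPairs S ≤ 2 * n := by
  exact key n S c r hr hsphere hdiam hcard
end

section
/- If a ≥ 1/2 and points x₁, …, x_n lie on a circle of radius r in the plane with consecutive points at distance exactly 1 (indices cyclic), and the diameter graph of the point set is exactly this cycle, then n is odd. -/
set_option maxHeartbeats 1000000

private lemma lemC (c1 q1 q2 : ℝ) (h1 : c1^2 ≤ 1) (h2 : (c1-1)^2 ≤ 1)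
    (h3 : (c1-q1)^2+q2^2 = 1) (h4 : q1^2+q2^2 ≤ 1) (h5 : (q1-1)^2+q2^2 ≤ 1)
    (h0 : c1 ≠ 0) (h1' : c1 ≠ 1) : False := by
  have hc0 : 0 < c1 := by
    rcases lt_or_gt_of_ne h0 with h | h
    · nlinarith
    · exact h
  have hc1 : c1 < 1 := by
    rcases lt_or_gt_of_ne h1' with h | h
    · exact h
    · nlinarith
  nlinarith [mul_pos hc0 (by linarith : (0:ℝ) < 1 - c1)]

private lemma lemA' (c1 c2 d1 d2 : ℝ) (h1 : c1^2+c2^2 ≤ 1) (h2 : (c1-1)^2+c2^2 ≤ 1)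
    (h3 : d1^2+d2^2 ≤ 1) (h4 : (d1-1)^2+d2^2 ≤ 1)
    (h5 : (c1-d1)^2+(c2-d2)^2 = 1) (hc : 0 < c2) (hd : 0 < d2) (hle : d2 ≤ c2) : False := by
  have hd1pos : 0 < d1 := by nlinarith [mul_pos hd hd, sq_nonneg d1]
  have hd1lt : d1 < 1 := by nlinarith [mul_pos hd hd, sq_nonneg (d1-1)]
  have key : 0 < c2 * d2 := mul_pos hc hd
  have hM : 0 ≤ (c2 - d2) * d2 := mul_nonneg (by linarith) hd.le
  have e1 : c2*d2 ≤ d1^2 - 2*c1*d1 := by linarith [h1, h5, hM]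
  have e2 : c2*d2 ≤ d1^2 - 2*c1*d1 + 2*c1 - 1 := by linarith [h2, h5, hM]
  have h3' : 2*c1 < d1 := by
    by_contra hcon
    push_neg at hcon
    have hmul : d1 * (d1 - 2*c1) ≤ 0 :=
      mul_nonpos_iff.2 (Or.inl ⟨hd1pos.le, by linarith⟩)
    nlinarith [hmul, e1, key]
  have h4' : d1 + 1 < 2*c1 := by
    by_contra hcon
    push_neg at hcon
    have hmul : 0 ≤ (1 - d1) * (d1 + 1 - 2*c1) :=
      mul_nonneg (by linarith) (by linarith)
    nlinarith [hmul, e2, key]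
  linarith

private lemma lemA (c1 c2 d1 d2 : ℝ) (h1 : c1^2+c2^2 ≤ 1) (h2 : (c1-1)^2+c2^2 ≤ 1)
    (h3 : d1^2+d2^2 ≤ 1) (h4 : (d1-1)^2+d2^2 ≤ 1)
    (h5 : (c1-d1)^2+(c2-d2)^2 = 1) (hc : 0 < c2) (hd : 0 < d2) : False := by
  rcases le_total d2 c2 with h | h
  · exact lemA' c1 c2 d1 d2 h1 h2 h3 h4 h5 hc hd h
  · exact lemA' d1 d2 c1 c2 h3 h4 h1 h2 (by linear_combination h5) hd hc h

private lemma lemB (c1 c2 d1 d2 : ℝ) (hc1 : (c1-1)^2+c2^2 = 1) (hc2 : c1^2+c2^2 ≤ 1)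
    (hd1 : d1^2+d2^2 = 1) (hd2 : (d1-1)^2+d2^2 ≤ 1)
    (hcd : (c1-d1)^2+(c2-d2)^2 ≤ 1) (hc : 0 < c2) (hd : d2 < 0) : False := by
  nlinarith [mul_pos hc (neg_pos.2 hd), sq_nonneg (c1-d1), sq_nonneg (c1+d1-1),
    sq_nonneg (c2+d2), sq_nonneg (c2-d2), sq_nonneg (c1*d2 - d1*c2),
    sq_nonneg (c1*d2 + c2*d1 - d2), mul_pos (mul_pos hc hc) (neg_pos.2 hd)]

private lemma lemAns (c1 c2 d1 d2 : ℝ) (h1 : c1^2+c2^2 ≤ 1) (h2 : (c1-1)^2+c2^2 ≤ 1)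
    (h3 : d1^2+d2^2 ≤ 1) (h4 : (d1-1)^2+d2^2 ≤ 1)
    (h5 : (c1-d1)^2+(c2-d2)^2 = 1) (hc : c2 ≠ 0) (hd : d2 ≠ 0) : c2 * d2 < 0 := by
  rcases lt_or_gt_of_ne hc with h | h <;> rcases lt_or_gt_of_ne hd with h' | h'
  · exact (lemA c1 (-c2) d1 (-d2) (by linarith [h1]) (by linarith [h2]) (by linarith [h3])
      (by linarith [h4]) (by linear_combination h5) (by linarith) (by linarith)).elim
  · exact mul_neg_of_neg_of_pos h h'
  · exact mul_neg_of_pos_of_neg h h'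
  · exact (lemA c1 c2 d1 d2 h1 h2 h3 h4 h5 h h').elim

private lemma lemBns (c1 c2 d1 d2 : ℝ) (hc1 : (c1-1)^2+c2^2 = 1) (hc2 : c1^2+c2^2 ≤ 1)
    (hd1 : d1^2+d2^2 = 1) (hd2 : (d1-1)^2+d2^2 ≤ 1)
    (hcd : (c1-d1)^2+(c2-d2)^2 ≤ 1) (hc : c2 ≠ 0) (hd : d2 ≠ 0) : 0 < c2 * d2 := by
  rcases lt_or_gt_of_ne hc with h | h <;> rcases lt_or_gt_of_ne hd with h' | h'
  · exact mul_pos_of_neg_of_neg h h'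
  · exact (lemB c1 (-c2) d1 (-d2) (by linear_combination hc1) (by linarith [hc2])
      (by linear_combination hd1) (by linarith [hd2]) (by linarith [hcd])
      (by linarith) (by linarith)).elim
  · exact (lemB c1 c2 d1 d2 hc1 hc2 hd1 hd2 hcd h h').elim
  · exact mul_pos h h'

private lemma auxZ (k : ℕ) (hk : 2 ≤ k) (U G : ZMod (2*k) → ℝ)
    (hle : ∀ i j, (U i - U j)^2 + (G i - G j)^2 ≤ 1)
    (hcyc : ∀ i, (U i - U (i+1))^2 + (G i - G (i+1))^2 = 1)
    (hne : ∀ i j, i ≠ j → 0 < (U i - U j)^2 + (G i - G j)^2)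
    (hU0 : U 0 = 0) (hG0 : G 0 = 0) (hU1 : U 1 = 1) (hG1 : G 1 = 0) : False := by
  haveI : NeZero (2*k) := ⟨by omega⟩
  have inj : ∀ m l : ℕ, m < 2*k → l < 2*k → (m : ZMod (2*k)) = (l : ZMod (2*k)) → m = l := by
    intro m l hm hl h
    have h2 := congrArg ZMod.val h
    rwa [ZMod.val_natCast_of_lt hm, ZMod.val_natCast_of_lt hl] at h2
  have injne : ∀ m l : ℕ, m < 2*k → l < 2*k → m ≠ l →
      (m : ZMod (2*k)) ≠ (l : ZMod (2*k)) := fun m l hm hl hml h => hml (inj m l hm hl h)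
  have h20 : (2 : ZMod (2*k)) ≠ 0 := by
    have := injne 2 0 (by omega) (by omega) (by norm_num)
    exact_mod_cast this
  have h21 : (2 : ZMod (2*k)) ≠ 1 := by
    have := injne 2 1 (by omega) (by omega) (by norm_num)
    exact_mod_cast this
  have hm1 : (-1 : ZMod (2*k)) = ((2*k-1 : ℕ) : ZMod (2*k)) := by
    have h : ((2*k-1 : ℕ) : ZMod (2*k)) + 1 = 0 := by
      calc ((2*k-1 : ℕ) : ZMod (2*k)) + 1 = ((2*k : ℕ) : ZMod (2*k)) := by
            rw [show (2*k) = (2*k-1)+1 from by omega]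
            push_cast
            ring
        _ = 0 := ZMod.natCast_self _
    linear_combination -h
  have hm0 : (-1 : ZMod (2*k)) ≠ 0 := by
    rw [hm1]
    have := injne (2*k-1) 0 (by omega) (by omega) (by omega)
    exact_mod_cast this
  have hm1' : (-1 : ZMod (2*k)) ≠ 1 := by
    rw [hm1]
    have := injne (2*k-1) 1 (by omega) (by omega) (by omega)
    exact_mod_cast this
  have nonzero : ∀ j : ZMod (2*k), j ≠ 0 → j ≠ 1 → G j ≠ 0 := by
    intro j hj0 hj1 hGj
    have hU0' : U j ≠ 0 := by
      intro h
      have hp := hne j 0 hj0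
      rw [hU0, hG0, hGj, h] at hp
      norm_num at hp
    have hU1' : U j ≠ 1 := by
      intro h
      have hp := hne j 1 hj1
      rw [hU1, hG1, hGj, h] at hp
      norm_num at hp
    have h1 : (U j)^2 ≤ 1 := by have := hle j 0; rw [hU0, hG0, hGj] at this; linarith [this]
    have h2 : (U j - 1)^2 ≤ 1 := by have := hle j 1; rw [hU1, hG1, hGj] at this; linarith [this]
    have h3 : (U j - U (j+1))^2 + (G (j+1))^2 = 1 := by
      have := hcyc j; rw [hGj] at this; linear_combination this
    have h4 : (U (j+1))^2 + (G (j+1))^2 ≤ 1 := by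
      have := hle (j+1) 0; rw [hU0, hG0] at this; linarith [this]
    have h5 : (U (j+1) - 1)^2 + (G (j+1))^2 ≤ 1 := by
      have := hle (j+1) 1; rw [hU1, hG1] at this; linarith [this]
    exact lemC (U j) (U (j+1)) (G (j+1)) h1 h2 h3 h4 h5 hU0' hU1'
  have alt : ∀ i : ZMod (2*k), G i ≠ 0 → G (i+1) ≠ 0 → G i * G (i+1) < 0 := by
    intro i hi hi1
    have A1 : (U i)^2 + (G i)^2 ≤ 1 := by
      have := hle i 0; rw [hU0, hG0] at this; linarith [this]
    have A2 : (U i - 1)^2 + (G i)^2 ≤ 1 := by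
      have := hle i 1; rw [hU1, hG1] at this; linarith [this]
    have A3 : (U (i+1))^2 + (G (i+1))^2 ≤ 1 := by
      have := hle (i+1) 0; rw [hU0, hG0] at this; linarith [this]
    have A4 : (U (i+1) - 1)^2 + (G (i+1))^2 ≤ 1 := by
      have := hle (i+1) 1; rw [hU1, hG1] at this; linarith [this]
    exact lemAns _ _ _ _ A1 A2 A3 A4 (hcyc i) hi hi1
  have closing : 0 < G 2 * G (-1) := by
    have hC1 : (U 2 - 1)^2 + (G 2)^2 = 1 := by
      have h := hcyc 1
      rw [hU1, hG1, one_add_one_eq_two] at h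
      linear_combination h
    have hC2 : (U 2)^2 + (G 2)^2 ≤ 1 := by
      have := hle 2 0; rw [hU0, hG0] at this; linarith [this]
    have hD1 : (U (-1))^2 + (G (-1))^2 = 1 := by
      have h := hcyc (-1)
      rw [neg_add_cancel, hU0, hG0] at h
      linear_combination h
    have hD2 : (U (-1) - 1)^2 + (G (-1))^2 ≤ 1 := by
      have := hle (-1) 1; rw [hU1, hG1] at this; linarith [this]
    exact lemBns _ _ _ _ hC1 hC2 hD1 hD2 (hle 2 (-1)) (nonzero 2 h20 h21) (nonzero (-1) hm0 hm1')
  have main : ∀ m : ℕ, 2 ≤ m → m ≤ 2*k - 1 →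
      (Even m → 0 < G (m : ZMod (2*k)) * G (2 : ZMod (2*k))) ∧
      (¬ Even m → G (m : ZMod (2*k)) * G (2 : ZMod (2*k)) < 0) := by
    intro m hm
    induction m, hm using Nat.le_induction with
    | base =>
      intro _
      constructor
      · intro _
        have hc : ((2:ℕ) : ZMod (2*k)) = (2 : ZMod (2*k)) := by norm_cast
        rw [hc]
        exact mul_self_pos.2 (nonzero 2 h20 h21)
      · intro h
        exact absurd ⟨1, rfl⟩ h
    | succ p hp ih =>
      intro hub
      have hub' : p ≤ 2*k-1 := by omega
      have ihp := ih hub'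
      have hcast : ((p+1 : ℕ) : ZMod (2*k)) = (p : ZMod (2*k)) + 1 := by push_cast; ring
      have hGp : G (p : ZMod (2*k)) ≠ 0 := by
        refine nonzero _ ?_ ?_
        · have := injne p 0 (by omega) (by omega) (by omega)
          exact_mod_cast this
        · have := injne p 1 (by omega) (by omega) (by omega)
          exact_mod_cast this
      have hGp1 : G ((p : ZMod (2*k)) + 1) ≠ 0 := by
        rw [← hcast]
        refine nonzero _ ?_ ?_
        · have := injne (p+1) 0 (by omega) (by omega) (by omega)
          exact_mod_cast this
        · have := injne (p+1) 1 (by omega) (by omega) (by omega)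
          exact_mod_cast this
      have halt := alt (p : ZMod (2*k)) hGp hGp1
      constructor
      · intro hev
        have hodd : ¬ Even p := by
          rw [Nat.even_add_one] at hev
          exact hev
        have h1 := ihp.2 hodd
        rw [hcast]
        nlinarith [sq_nonneg (G (p : ZMod (2*k))), halt, h1]
      · intro hodd
        have hev : Even p := by
          rw [Nat.even_add_one] at hodd
          exact not_not.1 hodd
        have h1 := ihp.1 hev
        rw [hcast]
        nlinarith [sq_nonneg (G (p : ZMod (2*k))), halt, h1]
  have hodd : ¬ Even (2*k-1) := by
    rintro ⟨t, ht⟩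
    omega
  have hlast := (main (2*k-1) (by omega) le_rfl).2 hodd
  rw [← hm1] at hlast
  nlinarith [closing, hlast]

/-- Hopf–Pannwitz: there is no even cycle in the diameter graph of a planar point
set of diameter 1: no injective cyclic sequence of `2k` points (`k ≥ 2`) of
diameter at most 1 with consecutive points at distance exactly 1. -/
theorem stmt_12 (k : ℕ) (hk : 2 ≤ k) (x : ZMod (2 * k) → EuclideanSpace ℝ (Fin 2))
    (hinj : Function.Injective x)
    (hdiam : ∀ i j, dist (x i) (x j) ≤ 1)
    (hcycle : ∀ i, dist (x i) (x (i + 1)) = 1) :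
    False := by
  have dsq : ∀ p q : EuclideanSpace ℝ (Fin 2),
      dist p q ^ 2 = (p 0 - q 0)^2 + (p 1 - q 1)^2 := by
    intro p q
    rw [EuclideanSpace.dist_eq, Real.sq_sqrt (Finset.sum_nonneg fun i _ => sq_nonneg _)]
    simp [Fin.sum_univ_two, Real.dist_eq, sq_abs]
  have h0 : dist (x 0) (x 1) = 1 := by
    have := hcycle 0
    rwa [zero_add] at this
  have hw : (x 1 0 - x 0 0)^2 + (x 1 1 - x 0 1)^2 = 1 := by
    have h := dsq (x 0) (x 1)
    rw [h0] at h
    linear_combination -h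
  set U : ZMod (2*k) → ℝ := fun i =>
    (x 1 0 - x 0 0) * (x i 0 - x 0 0) + (x 1 1 - x 0 1) * (x i 1 - x 0 1) with hU
  set G : ZMod (2*k) → ℝ := fun i =>
    (x 1 0 - x 0 0) * (x i 1 - x 0 1) - (x 1 1 - x 0 1) * (x i 0 - x 0 0) with hG
  have key : ∀ i j, (U i - U j)^2 + (G i - G j)^2 = dist (x i) (x j)^2 := by
    intro i j
    simp only [hU, hG]
    rw [dsq]
    linear_combination ((x i 0 - x j 0)^2 + (x i 1 - x j 1)^2) * hw
  refine auxZ k hk U G ?_ ?_ ?_ ?_ ?_ ?_ ?_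
  · intro i j
    rw [key i j]
    nlinarith [hdiam i j, dist_nonneg (x := x i) (y := x j)]
  · intro i
    rw [key i (i+1), hcycle i]
    norm_num
  · intro i j hij
    rw [key i j]
    exact pow_pos (dist_pos.2 fun hh => hij (hinj hh)) 2
  · simp only [hU]
    ring
  · simp only [hG]
    ring
  · simp only [hU]
    linear_combination hw
  · simp only [hG]
    ring
end

section
/- Let S be a finite set of diameter 1 in ℝ² lying on a circle, with |S| = n even. Then the number of unordered pairs of points of S at distance exactly 1 is at most n − 1. -/
open Finset

open Classical in
noncomputable def distPairs {α : Type*} [PseudoMetricSpace α] (s : Finset α) (D : ℝ) :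
    Finset (α × α) :=
  s.offDiag.filter fun p => dist p.1 p.2 = D

theorem Finset.even_card_of_swap_mem {α : Type*} {P : Finset (α × α)}
    (hswap : ∀ p ∈ P, p.swap ∈ P) (hdiag : ∀ p ∈ P, p.1 ≠ p.2) : Even #P := by
  rw [← ZMod.natCast_eq_zero_iff_even, Finset.cast_card]
  refine Finset.sum_involution (fun p _ => p.swap) (fun _ _ => by decide) (fun p hp _ h => ?_)
    hswap (fun p _ => p.swap_swap)
  exact hdiag p hp (congrArg Prod.fst h).symm

section DistPairs

variable {α : Type*} [PseudoMetricSpace α] {s : Finset α} {D : ℝ}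

theorem mem_distPairs {p : α × α} :
    p ∈ distPairs s D ↔ p.1 ∈ s ∧ p.2 ∈ s ∧ p.1 ≠ p.2 ∧ dist p.1 p.2 = D := by
  simp [distPairs, and_assoc]

theorem even_card_distPairs : Even #(distPairs s D) := by
  refine even_card_of_swap_mem (fun p hp => ?_) (fun p hp => (mem_distPairs.1 hp).2.2.1)
  obtain ⟨h1, h2, hne, hd⟩ := mem_distPairs.1 hp
  exact mem_distPairs.2 ⟨h2, h1, hne.symm, dist_comm p.2 p.1 ▸ hd⟩

theorem card_distPairs_filter_fst_eq_two_of_lt [DecidableEq α]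
    (hdeg : ∀ z ∈ s, #((distPairs s D).filter (·.1 = z)) ≤ 2)
    (hlt : 2 * (#s - 1) < #(distPairs s D)) :
    ∀ z ∈ s, #((distPairs s D).filter (·.1 = z)) = 2 := by
  have hsum : #(distPairs s D) = ∑ z ∈ s, #((distPairs s D).filter (·.1 = z)) :=
    card_eq_sum_card_fiberwise fun p hp => (mem_distPairs.1 hp).1
  have hle := sum_le_sum hdeg
  rw [sum_const, smul_eq_mul, ← hsum] at hle
  obtain ⟨m, hm⟩ := even_card_distPairs (s := s) (D := D)
  refine (sum_eq_sum_iff_of_le hdeg).1 ?_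
  rw [← hsum, sum_const, smul_eq_mul]
  omega

end DistPairs

section Similarity

variable {α β : Type*} [MetricSpace α] [MetricSpace β] {f : α → β} {c : ℝ}

theorem injective_of_dist_eq_mul (hc : 0 < c) (hf : ∀ x y, dist (f x) (f y) = c * dist x y) :
    Function.Injective f := fun x y h => by
  simpa [hc.ne'] using (hf x y).symm.trans (dist_eq_zero.2 h)

theorem card_distPairs_image [DecidableEq β] (hc : 0 < c)
    (hf : ∀ x y, dist (f x) (f y) = c * dist x y) (s : Finset α) (D : ℝ) :
    #(distPairs (s.image f) (c * D)) = #(distPairs s D) := by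
  have hinj := injective_of_dist_eq_mul hc hf
  have : distPairs (s.image f) (c * D) = (distPairs s D).image (Prod.map f f) := by
    ext ⟨a, b⟩
    simp only [mem_distPairs, mem_image, Prod.exists, Prod.map, Prod.mk.injEq]
    constructor
    · rintro ⟨⟨x, hx, rfl⟩, ⟨y, hy, rfl⟩, hne, hd⟩
      refine ⟨x, y, ⟨hx, hy, fun h => hne (h ▸ rfl), ?_⟩, rfl, rfl⟩
      rw [hf] at hd
      exact mul_left_cancel₀ hc.ne' hd
    · rintro ⟨x, y, ⟨hx, hy, hne, hd⟩, rfl, rfl⟩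
      exact ⟨⟨x, hx, rfl⟩, ⟨y, hy, rfl⟩, hinj.ne hne, by rw [hf, hd]⟩
  rw [this, card_image_of_injective _ (hinj.prodMap hinj)]

end Similarity

theorem pow_card_eq_one_of_mul_mem {M : Type*} [CommMonoidWithZero M] [IsCancelMulZero M]
    [DecidableEq M] {A : Finset M} (h0 : (0 : M) ∉ A) {ζ : M} (hζ : ∀ z ∈ A, z * ζ ∈ A) :
    ζ ^ #A = 1 := by
  rcases A.eq_empty_or_nonempty with rfl | ⟨z, hz⟩
  · simp
  have hζ0 : ζ ≠ 0 := by rintro rfl; exact h0 (by simpa using hζ z hz)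
  have hinj : Set.InjOn (· * ζ) A := fun x _ y _ h => mul_right_cancel₀ hζ0 h
  have himage : A.image (· * ζ) = A :=
    eq_of_subset_of_card_le (image_subset_iff.2 hζ) (card_image_of_injOn hinj).ge
  have hprod : (∏ z ∈ A, z) * ζ ^ #A = (∏ z ∈ A, z) * 1 := by
    conv_rhs => rw [← himage, prod_image hinj]
    rw [prod_mul_distrib, prod_const, mul_one]
  have : Nontrivial M := ⟨⟨z, 0, fun h => h0 (h ▸ hz)⟩⟩
  exact mul_left_cancel₀ (prod_ne_zero_iff.2 fun x hx h => h0 (h ▸ hx)) hprod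

namespace Complex

open ComplexConjugate Real

theorem eq_or_eq_conj_of_re_eq {u v : ℂ} (hu : ‖u‖ = 1) (hv : ‖v‖ = 1) (h : u.re = v.re) :
    u = v ∨ u = conj v := by
  have hsq : u.im ^ 2 = v.im ^ 2 := by
    have hu' := Complex.sq_norm u
    have hv' := Complex.sq_norm v
    rw [hu, normSq_apply] at hu'
    rw [hv, normSq_apply] at hv'
    linear_combination hv' - hu' - (u.re + v.re) * h
  rcases sq_eq_sq_iff_eq_or_eq_neg.1 hsq with him | him
  · exact .inl (ext h him)
  · exact .inr (ext h (by simpa using him))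

theorem eq_neg_one_of_re_le {ζ : ℂ} (hζ : ‖ζ‖ = 1) (h : ζ.re ≤ -1) : ζ = -1 := by
  have hre : ζ.re = (-1 : ℂ).re := by
    have := neg_abs_le ζ.re
    have := abs_re_le_norm ζ
    simp only [neg_re, one_re]
    linarith
  rcases eq_or_eq_conj_of_re_eq hζ (by simp) hre with h | h <;> simpa using h

theorem mul_mul_conj_cancel {z : ℂ} (hz : ‖z‖ = 1) (w : ℂ) : z * (w * conj z) = w := by
  rw [mul_left_comm, mul_conj', hz]
  simp

theorem norm_sub_eq_norm_one_sub_mul_conj {z : ℂ} (hz : ‖z‖ = 1) (w : ℂ) :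
    ‖z - w‖ = ‖1 - w * conj z‖ := by
  rw [← one_mul ‖1 - _‖, ← hz, ← norm_mul, mul_sub, mul_one, mul_mul_conj_cancel hz]

theorem norm_one_sub_sq {u : ℂ} (hu : ‖u‖ = 1) : ‖1 - u‖ ^ 2 = 2 - 2 * u.re := by
  have := Complex.sq_norm u
  rw [hu, normSq_apply] at this
  rw [Complex.sq_norm, normSq_apply]
  simp only [sub_re, one_re, sub_im, one_im]
  nlinarith

theorem norm_one_sub_le_norm_one_sub_iff {u v : ℂ} (hu : ‖u‖ = 1) (hv : ‖v‖ = 1) :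
    ‖1 - u‖ ≤ ‖1 - v‖ ↔ v.re ≤ u.re := by
  rw [← sq_le_sq₀ (norm_nonneg _) (norm_nonneg _), norm_one_sub_sq hu, norm_one_sub_sq hv]
  constructor <;> intro h <;> linarith

theorem re_le_re_mul_conj_of_dist_le {z w ζ : ℂ} (hz : ‖z‖ = 1) (hw : ‖w‖ = 1)
    (hζ : ‖ζ‖ = 1) (h : dist z w ≤ ‖1 - ζ‖) : ζ.re ≤ (w * conj z).re := by
  rwa [dist_eq_norm, norm_sub_eq_norm_one_sub_mul_conj hz,
    norm_one_sub_le_norm_one_sub_iff (by simp [hz, hw]) hζ] at h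

theorem eq_mul_or_eq_mul_conj_of_dist_eq {z w ζ : ℂ} (hz : ‖z‖ = 1) (hw : ‖w‖ = 1)
    (hζ : ‖ζ‖ = 1) (h : dist z w = ‖1 - ζ‖) : w = z * ζ ∨ w = z * conj ζ := by
  have hu : ‖w * conj z‖ = 1 := by simp [hz, hw]
  rw [dist_eq_norm, norm_sub_eq_norm_one_sub_mul_conj hz] at h
  have hre : (w * conj z).re = ζ.re :=
    le_antisymm ((norm_one_sub_le_norm_one_sub_iff hζ hu).1 h.ge)
      ((norm_one_sub_le_norm_one_sub_iff hu hζ).1 h.le)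
  rcases eq_or_eq_conj_of_re_eq hu hζ hre with h | h <;>
    [left; right] <;> rw [← h, mul_mul_conj_cancel hz]

theorem exists_pow_eq_one_cos_pi_div_le_re {k : ℕ} (hk : k ≠ 0) {u : ℂ} (hu : ‖u‖ = 1) :
    ∃ ξ : ℂ, ξ ^ k = 1 ∧ Real.cos (π / k) ≤ (u * conj ξ).re := by
  obtain ⟨θ, rfl⟩ := (norm_eq_one_iff u).1 hu
  have hk' : (0 : ℝ) < k := by positivity
  set j : ℤ := round (k * θ / (2 * π))
  set δ : ℝ := θ - 2 * π * j / k
  have hδ : |δ| ≤ π / k := by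
    have hround : |k * θ / (2 * π) - j| ≤ 1 / 2 := abs_sub_round _
    have : δ = (k * θ / (2 * π) - j) * (2 * π / k) := by
      simp only [δ]; field_simp
    rw [this, abs_mul, abs_of_pos (by positivity : (0 : ℝ) < 2 * π / k)]
    calc _ ≤ 1 / 2 * (2 * π / k) := by gcongr
      _ = π / k := by ring
  refine ⟨exp ((2 * π * j / k : ℝ) * I), ?_, ?_⟩
  · rw [← exp_nat_mul, exp_eq_one_iff]
    exact ⟨j, by push_cast; field_simp⟩
  · rw [← exp_conj, map_mul, conj_ofReal, conj_I, ← exp_add,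
      show (θ : ℂ) * I + (2 * π * j / k : ℝ) * -I = (δ : ℝ) * I by
        simp only [δ]; push_cast; ring,
      exp_ofReal_mul_I_re, ← Real.cos_abs δ]
    exact Real.cos_le_cos_of_nonneg_of_le_pi (abs_nonneg _)
      (div_le_self pi_pos.le (by exact_mod_cast Nat.one_le_iff_ne_zero.2 hk)) hδ

theorem re_le_cos_pi_div_of_pow_eq_neg_one {k : ℕ} {v : ℂ} (hv : v ^ k = -1) :
    v.re ≤ Real.cos (π / k) := by
  have hk : k ≠ 0 := by rintro rfl; norm_num at hv
  have hk' : (0 : ℝ) < k := by positivity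
  have hnorm : ‖v‖ = 1 := by
    simpa [norm_pow, pow_eq_one_iff_of_nonneg (norm_nonneg v) hk] using congrArg norm hv
  set θ := v.arg
  have hvθ : v = exp (θ * I) := by
    simpa [hnorm] using (norm_mul_exp_arg_mul_I v).symm
  obtain ⟨m, hm⟩ : ∃ m : ℤ, (k * θ : ℝ) = π + m * (2 * π) := by
    have : exp ((k * θ : ℝ) * I) = exp ((π : ℝ) * I) := by
      rw [exp_pi_mul_I, ← hv, hvθ, ← exp_nat_mul]; push_cast; ring_nf
    obtain ⟨m, hm⟩ := exp_eq_exp_iff_exists_int.1 this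
    exact ⟨m, by simpa using congrArg im hm⟩
  have hθ : π / k ≤ |θ| := by
    have hodd : (1 : ℝ) ≤ |(2 * m + 1 : ℝ)| := by
      exact_mod_cast Int.one_le_abs (show 2 * m + 1 ≠ 0 by omega)
    rw [div_le_iff₀ hk', ← abs_of_pos hk', ← abs_mul, mul_comm, hm]
    calc π = π * 1 := by ring
      _ ≤ π * |(2 * m + 1 : ℝ)| := by gcongr
      _ = |π * (2 * m + 1)| := by rw [abs_mul, abs_of_pos pi_pos]
      _ = |π + m * (2 * π)| := by ring_nf
  rw [hvθ, exp_ofReal_mul_I_re, ← Real.cos_abs θ]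
  exact Real.cos_le_cos_of_nonneg_of_le_pi (by positivity)
    (abs_le.2 ⟨(neg_pi_lt_arg v).le, arg_le_pi v⟩) hθ

theorem pow_eq_neg_one_of_re_eq_cos_pi_div {k : ℕ} (hk : k ≠ 0) {v : ℂ} (hv : ‖v‖ = 1)
    (hre : v.re = Real.cos (π / k)) : v ^ k = -1 := by
  set ω := exp ((π / k : ℝ) * I)
  have hωk : ω ^ k = -1 := by
    rw [← exp_nat_mul, ← exp_pi_mul_I]
    congr 1
    push_cast
    field_simp
  rcases eq_or_eq_conj_of_re_eq hv (norm_exp_ofReal_mul_I _)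
    (by rw [hre, exp_ofReal_mul_I_re]) with rfl | rfl
  · exact hωk
  · rw [← map_pow, hωk, map_neg, map_one]

theorem pow_eq_one_of_forall_neg_cos_pi_div_le_re {k : ℕ} (hk : Odd k) {u : ℂ}
    (hu : ‖u‖ = 1) (h : ∀ ξ : ℂ, ξ ^ k = 1 → -Real.cos (π / k) ≤ (u * conj ξ).re) :
    u ^ k = 1 := by
  have hk0 : k ≠ 0 := hk.pos.ne'
  obtain ⟨ξ, hξ, hle⟩ :=
    exists_pow_eq_one_cos_pi_div_le_re hk0 (u := -u) (by rw [norm_neg, hu])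
  have hge := h ξ hξ
  rw [neg_mul, neg_re] at hle
  have hpow := pow_eq_neg_one_of_re_eq_cos_pi_div hk0 (v := -u * conj ξ)
    (by simp [hu, norm_eq_one_of_pow_eq_one hξ hk0]) (by rw [neg_mul, neg_re]; linarith)
  rw [mul_pow, ← map_pow, hξ, map_one, mul_one, hk.neg_pow] at hpow
  exact neg_inj.1 hpow

theorem odd_card_of_mul_mem {A : Finset ℂ} {z₀ ζ : ℂ} (hA : ∀ z ∈ A, ‖z‖ = 1) (hz₀ : z₀ ∈ A)
    (hζ : ‖ζ‖ = 1) (hζ₁ : ζ ≠ -1) (hmem : ∀ z ∈ A, z * ζ ∈ A)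
    (hmin : ∀ z ∈ A, ∀ w ∈ A, ζ.re ≤ (w * conj z).re) : Odd #A := by
  set k := orderOf ζ
  have hprim : IsPrimitiveRoot ζ k := IsPrimitiveRoot.orderOf ζ
  have hdvd : k ∣ #A :=
    orderOf_dvd_of_pow_eq_one (pow_card_eq_one_of_mul_mem (fun h => by simpa using hA 0 h) hmem)
  have hk : 0 < k := Nat.pos_of_dvd_of_pos hdvd (Finset.card_pos.2 ⟨z₀, hz₀⟩)
  have : NeZero k := ⟨hk.ne'⟩
  have hroots : ∀ ξ : ℂ, ξ ^ k = 1 → z₀ * ξ ∈ A := by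
    have hpow : ∀ i : ℕ, z₀ * ζ ^ i ∈ A := by
      intro i
      induction i with
      | zero => simpa using hz₀
      | succ i ih => simpa [pow_succ, mul_assoc] using hmem _ ih
    intro ξ hξ
    obtain ⟨i, -, rfl⟩ := hprim.eq_pow_of_pow_eq_one hξ
    exact hpow i
  have hodd : Odd k := by
    refine Nat.not_even_iff_odd.1 fun heven => hζ₁ (eq_neg_one_of_re_le hζ ?_)
    simpa only [mul_assoc, mul_mul_conj_cancel (hA z₀ hz₀), neg_re, one_re] using
      hmin z₀ hz₀ _ (hroots _ heven.neg_one_pow)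
  have hζre : -Real.cos (π / k) ≤ ζ.re := by
    have := re_le_cos_pi_div_of_pow_eq_neg_one (v := -ζ) (by rw [hodd.neg_pow, hprim.pow_eq_one])
    rw [neg_re] at this
    linarith
  have hsub : A ⊆ (Polynomial.nthRootsFinset k (1 : ℂ)).image (z₀ * ·) := by
    intro w hw
    refine Finset.mem_image.2 ⟨w * conj z₀, (Polynomial.mem_nthRootsFinset hk 1).2 ?_, ?_⟩
    · refine pow_eq_one_of_forall_neg_cos_pi_div_le_re hodd (by simp [hA w hw, hA z₀ hz₀]) ?_
      intro ξ hξ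
      have := hmin _ (hroots ξ hξ) w hw
      rw [map_mul, ← mul_assoc] at this
      linarith
    · exact mul_mul_conj_cancel (hA z₀ hz₀) w
  have hle : #A ≤ k :=
    (Finset.card_le_card hsub).trans (Finset.card_image_le.trans hprim.card_nthRootsFinset.le)
  rwa [Nat.le_antisymm hle (Nat.le_of_dvd (Finset.card_pos.2 ⟨z₀, hz₀⟩) hdvd)]

theorem card_distPairs_le_of_norm_eq_one {A : Finset ℂ} {D : ℝ} (hA : ∀ z ∈ A, ‖z‖ = 1)
    (hdiam : ∀ z ∈ A, ∀ w ∈ A, dist z w ≤ D) (heven : Even #A) :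
    #(distPairs A D) ≤ 2 * (#A - 1) := by
  by_contra! hlt
  obtain ⟨⟨z₁, w₁⟩, hp⟩ : (distPairs A D).Nonempty := Finset.card_pos.1 (by omega)
  obtain ⟨hz₁, hw₁, -, hD⟩ := mem_distPairs.1 hp
  set ζ := w₁ * conj z₁
  have hζ : ‖ζ‖ = 1 := by simp [ζ, hA _ hz₁, hA _ hw₁]
  rw [dist_eq_norm, norm_sub_eq_norm_one_sub_mul_conj (hA _ hz₁)] at hD
  subst hD
  have hnbr : ∀ z ∈ A,
      (distPairs A ‖1 - ζ‖).filter (·.1 = z) ⊆ {(z, z * ζ), (z, z * conj ζ)} := by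
    rintro z hz ⟨a, w⟩ hp
    obtain ⟨⟨-, hw, -, hd⟩, rfl : a = z⟩ := (mem_filter.1 hp).imp_left mem_distPairs.1
    rcases eq_mul_or_eq_mul_conj_of_dist_eq (hA _ hz) (hA _ hw) hζ hd with rfl | rfl <;> simp
  have hreg := card_distPairs_filter_fst_eq_two_of_lt
    (fun z hz => (card_le_card (hnbr z hz)).trans card_le_two) hlt
  have hmem : ∀ z ∈ A, z * ζ ∈ A := by
    intro z hz
    have hfull := eq_of_subset_of_card_le (hnbr z hz) (by rw [hreg z hz]; exact card_le_two)
    have : (z, z * ζ) ∈ (distPairs A ‖1 - ζ‖).filter (·.1 = z) := by simp [hfull]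
    exact (mem_distPairs.1 (mem_filter.1 this).1).2.1
  have hζ₁ : ζ ≠ -1 := by
    rintro h
    have := card_le_card (hnbr z₁ hz₁)
    rw [hreg z₁ hz₁] at this
    simp [h] at this
  have hmin : ∀ z ∈ A, ∀ w ∈ A, ζ.re ≤ (w * conj z).re := fun z hz w hw =>
    re_le_re_mul_conj_of_dist_le (hA z hz) (hA w hw) hζ (hdiam z hz w hw)
  exact Nat.not_odd_iff_even.2 heven (odd_card_of_mul_mem hA hz₁ hζ hζ₁ hmem hmin)

end Complex

theorem EuclideanSpace.exists_dist_eq_inv_mul_to_complex (c : EuclideanSpace ℝ (Fin 2)) {r : ℝ}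
    (hr : 0 < r) : ∃ f : EuclideanSpace ℝ (Fin 2) → ℂ,
      (∀ x y, dist (f x) (f y) = r⁻¹ * dist x y) ∧ ∀ x, ‖f x‖ = r⁻¹ * dist x c := by
  let e := Complex.orthonormalBasisOneI.repr.symm
  have hf : ∀ x y, dist ((e x - e c) / r) ((e y - e c) / r) = r⁻¹ * dist x y := fun x y => by
    rw [dist_eq_norm, ← sub_div, sub_sub_sub_cancel_right, norm_div, Complex.norm_real,
      Real.norm_of_nonneg hr.le, ← dist_eq_norm, e.dist_map, inv_mul_eq_div]
  exact ⟨fun x => (e x - e c) / r, hf, fun x => by simpa using hf x c⟩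

/-- An even number `n` of concyclic points of diameter 1 in the plane have at most
`n − 1` diameter pairs. -/
theorem stmt_13 (n : ℕ) (heven : Even n) (S : Finset (EuclideanSpace ℝ (Fin 2)))
    (hcard : S.card = n)
    (hcirc : ∃ (c : EuclideanSpace ℝ (Fin 2)) (r : ℝ), ∀ x ∈ S, dist x c = r)
    (hdiam : ∀ x ∈ S, ∀ y ∈ S, dist x y ≤ 1)
    (hattain : ∃ x ∈ S, ∃ y ∈ S, dist x y = 1) :
    unitPairs S ≤ 2 * (n - 1) := by
  obtain ⟨c, r, hc⟩ := hcirc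
  obtain ⟨x₀, hx₀, y₀, hy₀, hxy₀⟩ := hattain
  have hr : 0 < r := by
    have := dist_triangle x₀ c y₀
    rw [hc x₀ hx₀, dist_comm c, hc y₀ hy₀, hxy₀] at this
    linarith
  obtain ⟨f, hf, hfc⟩ := EuclideanSpace.exists_dist_eq_inv_mul_to_complex c hr
  have hunit : ∀ z ∈ S.image f, ‖z‖ = 1 := forall_mem_image.2 fun x hx => by
    rw [hfc, hc x hx, inv_mul_cancel₀ hr.ne']
  have hdiam' : ∀ z ∈ S.image f, ∀ w ∈ S.image f, dist z w ≤ r⁻¹ * 1 :=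
    forall_mem_image.2 fun x hx => forall_mem_image.2 fun y hy => by
      rw [hf]; exact mul_le_mul_of_nonneg_left (hdiam x hx y hy) (inv_nonneg.2 hr.le)
  have hcard' : #(S.image f) = n := by
    rw [card_image_of_injective _ (injective_of_dist_eq_mul (inv_pos.2 hr) hf), hcard]
  calc unitPairs S = #(distPairs (S.image f) (r⁻¹ * 1)) :=
        (card_distPairs_image (inv_pos.2 hr) hf S 1).symm
    _ ≤ 2 * (n - 1) :=
        hcard' ▸ Complex.card_distPairs_le_of_norm_eq_one hunit hdiam' (hcard' ▸ heven)
end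

section
/- For every odd n ≥ 3 there exists a set of n points on a circle in ℝ² of diameter 1 with exactly n pairs at distance 1. -/
open Real Finset

section Trigonometry

variable {N x : ℝ}

theorem cos_pi_mul_div_eq_cos_abs (hN : 0 < N) : cos (π * x / N) = cos (π * |x| / N) := by
  rw [← cos_abs (π * x / N), abs_div, abs_mul, abs_of_pos pi_pos, abs_of_pos hN]

theorem pi_mul_abs_div_mem_Icc (hN : 0 < N) (hx : |x| ≤ N) : π * |x| / N ∈ Set.Icc 0 π := by
  refine ⟨by positivity, ?_⟩
  rw [div_le_iff₀ hN]
  nlinarith [pi_pos]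

theorem cos_pi_mul_div_le_cos_pi_div (hN : 0 < N) (h1 : 1 ≤ |x|) (h2 : |x| ≤ N) :
    cos (π * x / N) ≤ cos (π / N) := by
  rw [cos_pi_mul_div_eq_cos_abs hN]
  refine strictAntiOn_cos.antitoneOn ⟨by positivity, ?_⟩ (pi_mul_abs_div_mem_Icc hN h2) ?_
  · rw [div_le_iff₀ hN]; nlinarith [pi_pos, abs_nonneg x]
  · gcongr; nlinarith [pi_pos]

theorem cos_pi_mul_div_eq_cos_pi_div_iff (hN : 1 ≤ N) (hx : |x| ≤ N) :
    cos (π * x / N) = cos (π / N) ↔ |x| = 1 := by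
  have hN0 : 0 < N := by linarith
  have h1 : π / N ∈ Set.Icc 0 π := by simpa using pi_mul_abs_div_mem_Icc (x := 1) hN0 (by simpa)
  rw [cos_pi_mul_div_eq_cos_abs hN0, injOn_cos.eq_iff (pi_mul_abs_div_mem_Icc hN0 hx) h1,
    div_left_inj' hN0.ne', mul_eq_left₀ pi_pos.ne']

theorem sin_pi_mul_div_eq_cos {n : ℝ} (d : ℝ) (hn : 0 < n) :
    sin (π * d / n) = cos (π * (n - 2 * d) / (2 * n)) := by
  rw [← cos_pi_div_two_sub]; congr 1; field_simp

variable {n d : ℕ}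

theorem sin_pi_mul_div_nonneg (hd : d ≤ n) : 0 ≤ sin (π * d / n) := by
  rcases (Nat.zero_le n).eq_or_lt with rfl | hn
  · simp
  refine sin_nonneg_of_nonneg_of_le_pi (by positivity) ?_
  rw [div_le_iff₀ (by positivity)]
  exact mul_le_mul_of_nonneg_left (by exact_mod_cast hd) pi_pos.le

theorem sin_pi_mul_div_le_cos_pi_div (hn : Odd n) (hd : d ≤ n) :
    sin (π * d / n) ≤ cos (π / (2 * n)) := by
  have hn0 : (0 : ℝ) < n := by exact_mod_cast hn.pos
  have h1 : 1 ≤ |(n : ℤ) - 2 * d| := Int.one_le_abs (by obtain ⟨k, rfl⟩ := hn; omega)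
  rw [sin_pi_mul_div_eq_cos d hn0]
  refine cos_pi_mul_div_le_cos_pi_div (by positivity) (by exact_mod_cast h1) ?_
  rw [abs_le]; constructor <;> linarith [(Nat.cast_le (α := ℝ)).2 hd]

theorem sin_pi_mul_div_eq_cos_pi_div_iff (hn : 0 < n) (hd : d ≤ n) :
    sin (π * d / n) = cos (π / (2 * n)) ↔ |(n : ℤ) - 2 * d| = 1 := by
  have hn1 : (1 : ℝ) ≤ n := by exact_mod_cast hn
  rw [sin_pi_mul_div_eq_cos d (by positivity), cos_pi_mul_div_eq_cos_pi_div_iff (by linarith)]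
  · exact_mod_cast Iff.rfl
  · rw [abs_le]; constructor <;> linarith [(Nat.cast_le (α := ℝ)).2 hd]

end Trigonometry

namespace ZMod

variable {n : ℕ} [NeZero n]

theorem dist_toCircle (j k : ZMod n) :
    dist (toCircle j : ℂ) (toCircle k) = 2 * sin (π * (j - k).val / n) := by
  have hjk : (toCircle j : ℂ) = toCircle (j - k) * toCircle k := by
    rw [← Circle.coe_mul, ← AddChar.map_add_eq_mul, sub_add_cancel]
  rw [dist_eq_norm, hjk, ← sub_one_mul, norm_mul, Circle.norm_coe, mul_one, toCircle_apply,
    show 2 * π * Complex.I * (j - k).val / n =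
        Complex.I * ((2 * π * (j - k).val / n : ℝ) : ℂ) by push_cast; ring,
    Complex.norm_exp_I_mul_ofReal_sub_one,
    show 2 * π * (j - k).val / n / 2 = π * (j - k).val / n by ring,
    Real.norm_of_nonneg (mul_nonneg zero_le_two (sin_pi_mul_div_nonneg (val_lt _).le))]

theorem eq_natCast_iff_val_eq {t : ZMod n} {i : ℕ} (hi : i < n) : t = i ↔ t.val = i :=
  ⟨fun h => h ▸ val_cast_of_lt hi, fun h => by rw [← h, natCast_zmod_val]⟩

omit [NeZero n] in
theorem neg_natCast_half {m : ℕ} (hn : n = 2 * m + 1) : -(m : ZMod n) = (m + 1 : ℕ) :=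
  neg_eq_of_add_eq_zero_left (by rw [← Nat.cast_add, ← natCast_self n, hn]; ring_nf)

theorem abs_sub_two_mul_val_eq_one_iff {m : ℕ} (hm : 0 < m) (hn : n = 2 * m + 1) (t : ZMod n) :
    |(n : ℤ) - 2 * t.val| = 1 ↔ t = m ∨ t = -m := by
  rw [abs_eq zero_le_one, neg_natCast_half hn, eq_natCast_iff_val_eq, eq_natCast_iff_val_eq]
    <;> omega

theorem natCast_half_ne_neg {m : ℕ} (hm : 0 < m) (hn : n = 2 * m + 1) :
    (m : ZMod n) ≠ -m := by
  rw [neg_natCast_half hn, Ne, eq_natCast_iff_val_eq, val_cast_of_lt] <;> omega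

end ZMod

theorem card_filter_sub_mem {G : Type*} [AddGroup G] [Fintype G] [DecidableEq G] (T : Finset G) :
    #{q : G × G | q.1 - q.2 ∈ T} = #T * Fintype.card G := by
  have : ({q : G × G | q.1 - q.2 ∈ T} : Finset _) =
      (T ×ˢ univ).image fun q => (q.1 + q.2, q.2) := by
    ext ⟨j, k⟩
    simpa using ⟨fun h => ⟨_, h, sub_add_cancel j k⟩, by rintro ⟨a, ha, rfl⟩; simpa⟩
  rw [this, card_image_of_injective, card_product, card_univ]
  rintro ⟨a, b⟩ ⟨c, d⟩ h
  simp only [Prod.mk.injEq] at h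
  obtain ⟨h, rfl⟩ := h
  rw [add_left_inj b |>.1 h]

theorem unitPairs_image_univ {ι : Type*} [Fintype ι] [DecidableEq ι] {d : ℕ}
    {p : ι → EuclideanSpace ℝ (Fin d)} (hp : Function.Injective p) :
    unitPairs (univ.image p) = #{q : ι × ι | dist (p q.1) (p q.2) = 1} := by
  rw [unitPairs, ← card_image_of_injective _ (hp.prodMap hp)]
  congr 1
  ext ⟨x, y⟩
  simp only [mem_filter, mem_offDiag, mem_image, mem_univ, true_and, Prod.map, Prod.mk.injEq,
    Prod.exists]
  constructor
  · rintro ⟨⟨⟨a, rfl⟩, ⟨b, rfl⟩, -⟩, h⟩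
    exact ⟨a, b, h, rfl, rfl⟩
  · rintro ⟨a, b, h, rfl, rfl⟩
    exact ⟨⟨⟨a, rfl⟩, ⟨b, rfl⟩, fun hab => by simp [hab] at h⟩, h⟩

noncomputable def regularPolygon (n : ℕ) [NeZero n] (r : ℝ) (j : ZMod n) :
    EuclideanSpace ℝ (Fin 2) :=
  Complex.orthonormalBasisOneI.repr (r • (ZMod.toCircle j : ℂ))

section RegularPolygon

variable {n : ℕ} [NeZero n] {r : ℝ}

theorem dist_regularPolygon_zero (hr : 0 ≤ r) (j : ZMod n) :
    dist (regularPolygon n r j) 0 = r := by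
  rw [dist_zero_right, regularPolygon, LinearIsometryEquiv.norm_map, norm_smul, Circle.norm_coe,
    mul_one, Real.norm_of_nonneg hr]

theorem dist_regularPolygon (hr : 0 ≤ r) (j k : ZMod n) :
    dist (regularPolygon n r j) (regularPolygon n r k) = 2 * r * sin (π * (j - k).val / n) := by
  rw [regularPolygon, regularPolygon, LinearIsometryEquiv.dist_map, dist_smul₀,
    ZMod.dist_toCircle, Real.norm_of_nonneg hr]
  ring

theorem regularPolygon_injective (hr : r ≠ 0) : Function.Injective (regularPolygon n r) := by
  intro j k h
  apply ZMod.injective_toCircle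
  have := Complex.orthonormalBasisOneI.repr.injective h
  exact Circle.ext (smul_right_injective ℂ hr this)

end RegularPolygon

/-- For every odd `n ≥ 3` there exist `n` concyclic points of diameter 1 in the
plane with exactly `n` diameter pairs. -/
theorem stmt_14 (n : ℕ) (hn : 3 ≤ n) (hodd : Odd n) :
    ∃ (S : Finset (EuclideanSpace ℝ (Fin 2))) (c : EuclideanSpace ℝ (Fin 2)) (r : ℝ),
      S.card = n ∧ (∀ x ∈ S, dist x c = r) ∧
      (∀ x ∈ S, ∀ y ∈ S, dist x y ≤ 1) ∧
      unitPairs S = 2 * n := by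
  obtain ⟨m, hm⟩ := hodd
  have : NeZero n := ⟨by omega⟩
  have hcos : 0 < cos (π / (2 * n)) := by
    refine cos_pos_of_mem_Ioo ⟨by linarith [pi_pos, show 0 < π / (2 * n) by positivity], ?_⟩
    rw [div_lt_div_iff₀ (by positivity) two_pos]
    nlinarith [pi_pos, show (3 : ℝ) ≤ n by exact_mod_cast hn]
  set r := 1 / (2 * cos (π / (2 * n))) with hr
  set P := regularPolygon n r
  have hP : Function.Injective P := regularPolygon_injective (by positivity)
  have hdist (j k : ZMod n) :
      dist (P j) (P k) = sin (π * (j - k).val / n) / cos (π / (2 * n)) := by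
    rw [dist_regularPolygon (by positivity), hr]
    field_simp
  have hdist_eq_one (j k : ZMod n) :
      dist (P j) (P k) = 1 ↔ j - k ∈ ({(m : ZMod n), -(m : ZMod n)} : Finset (ZMod n)) := by
    rw [hdist, div_eq_one_iff_eq hcos.ne',
      sin_pi_mul_div_eq_cos_pi_div_iff (by omega) (ZMod.val_lt _).le,
      ZMod.abs_sub_two_mul_val_eq_one_iff (by omega) hm, mem_insert, mem_singleton]
  refine ⟨univ.image P, 0, r, ?_, ?_, ?_, ?_⟩
  · rw [card_image_of_injective _ hP, card_univ, ZMod.card]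
  · simpa using dist_regularPolygon_zero (by positivity)
  · simp only [mem_image, mem_univ, true_and]
    rintro _ ⟨j, rfl⟩ _ ⟨k, rfl⟩
    rw [hdist, div_le_one hcos]
    exact sin_pi_mul_div_le_cos_pi_div ⟨m, hm⟩ (ZMod.val_lt _).le
  · rw [unitPairs_image_univ hP, filter_congr fun q _ => hdist_eq_one q.1 q.2,
      card_filter_sub_mem, card_pair (ZMod.natCast_half_ne_neg (by omega) hm), ZMod.card, mul_comm]
end

section
/- For d = 2p ≥ 4 even, the maximum number u_d(n) of unit-distance pairs among n points in ℝ^d satisfies u_d(n) ≥ t_p(n), where t_p(n) is the number of edges of the Turán p-partite graph on n vertices. -/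
/-!
Realise ℝ^{2p} as the orthogonal sum of `p` copies of the plane ℂ and put the points of the
`c`-th part of the Turán graph on the circle of radius `1/√2` in the `c`-th copy. Two points
`x, y` in different copies are orthogonal, so `‖x - y‖² = ‖x‖² + ‖y‖² = 1/2 + 1/2 = 1`: every
edge of the Turán graph becomes a unit distance. Distinct points on one circle are supplied by
the Cayley transform `m ↦ (m + i)/(m - i)`.
-/

open Finset Function SimpleGraph Complex ComplexConjugate

lemma dist_eq_one_of_inner_eq_zero {E : Type*} [NormedAddCommGroup E] [InnerProductSpace ℝ E]
    {x y : E} (hxy : inner ℝ x y = 0) (h : ‖x‖ ^ 2 + ‖y‖ ^ 2 = 1) : dist x y = 1 := by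
  have : ‖x - y‖ ^ 2 = 1 := by rw [norm_sub_sq_real, hxy]; linarith
  rw [dist_eq_norm, ← Real.sqrt_sq (norm_nonneg _), this, Real.sqrt_one]

namespace PiLp

variable {ι F : Type*} [DecidableEq ι]

lemma single_eq_single_iff_of_ne_zero [AddCommGroup F] (q : ENNReal) {i j : ι} {a b : F}
    (ha : a ≠ 0) : (single q i a : PiLp q fun _ : ι => F) = single q j b ↔ i = j ∧ a = b := by
  refine ⟨fun h => ?_, by rintro ⟨rfl, rfl⟩; rfl⟩
  have hi := congrArg (fun x : PiLp q (fun _ : ι => F) => x i) h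
  by_cases hij : i = j
  · subst hij; simpa using hi
  · simp [hij, ha] at hi

lemma inner_single_single_of_ne [Fintype ι] [NormedAddCommGroup F] [InnerProductSpace ℝ F]
    {i j : ι} (h : i ≠ j) (a b : F) :
    inner ℝ (single 2 i a : PiLp 2 fun _ : ι => F) (single 2 j b) = 0 := by
  rw [PiLp.inner_apply]
  refine Finset.sum_eq_zero fun k _ => ?_
  by_cases hk : k = i
  · subst hk; simp [h]
  · simp [hk]

end PiLp

lemma finrank_piLp_complex (ι : Type*) [Fintype ι] :
    Module.finrank ℝ (PiLp 2 fun _ : ι => ℂ) = 2 * Fintype.card ι := by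
  simp [(WithLp.linearEquiv 2 ℝ (ι → ℂ)).finrank_eq, Module.finrank_pi_fintype, mul_comm]

noncomputable def cayley (m : ℕ) : ℂ := (m + I) / (m - I)

lemma natCast_sub_I_ne_zero (m : ℕ) : (m : ℂ) - I ≠ 0 := fun h => by
  simpa using congrArg im h

lemma norm_cayley (m : ℕ) : ‖cayley m‖ = 1 := by
  have hconj : (m : ℂ) - I = conj (m + I) := by simp [sub_eq_add_neg]
  have hne : (m : ℂ) + I ≠ 0 := by
    rw [← map_ne_zero conj, ← hconj]; exact natCast_sub_I_ne_zero m
  rw [cayley, norm_div, hconj, norm_conj, div_self (norm_ne_zero_iff.mpr hne)]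

lemma cayley_injective : Injective cayley := by
  intro m m' h
  have hshift : ∀ k : ℕ, cayley k = 1 + 2 * I / (k - I) := fun k => by
    rw [cayley]; field_simp [natCast_sub_I_ne_zero k]; ring
  rw [hshift, hshift, add_right_inj,
    div_eq_div_iff (natCast_sub_I_ne_zero m) (natCast_sub_I_ne_zero m')] at h
  have h2I : (2 : ℂ) * I ≠ 0 := by simp
  exact_mod_cast (sub_left_inj.mp (mul_left_cancel₀ h2I h)).symm

section Lenz

variable {ι : Type*} [DecidableEq ι]

noncomputable def lenzPoint (x : ℕ × ι) : PiLp 2 fun _ : ι => ℂ :=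
  PiLp.single 2 x.2 ((Real.sqrt 2)⁻¹ • cayley x.1)

lemma norm_inv_sqrt_two_smul_cayley_sq (m : ℕ) : ‖(Real.sqrt 2)⁻¹ • cayley m‖ ^ 2 = 1 / 2 := by
  rw [norm_smul, norm_cayley, mul_one, norm_inv, Real.norm_eq_abs,
    abs_of_nonneg (Real.sqrt_nonneg 2), inv_pow, Real.sq_sqrt zero_le_two, one_div]

lemma lenzPoint_injective : Injective (lenzPoint (ι := ι)) := by
  rintro ⟨m, c⟩ ⟨m', c'⟩ h
  have hne : (Real.sqrt 2)⁻¹ • cayley m ≠ 0 := by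
    rw [← norm_ne_zero_iff, ← pow_ne_zero_iff two_ne_zero, norm_inv_sqrt_two_smul_cayley_sq]
    norm_num
  obtain ⟨rfl, hm⟩ := (PiLp.single_eq_single_iff_of_ne_zero 2 hne).mp h
  rw [cayley_injective (smul_right_injective ℂ (by positivity) hm)]

lemma dist_lenzPoint_of_ne [Fintype ι] {x y : ℕ × ι} (h : x.2 ≠ y.2) :
    dist (lenzPoint x) (lenzPoint y) = 1 :=
  dist_eq_one_of_inner_eq_zero (PiLp.inner_single_single_of_ne h _ _) (by
    rw [lenzPoint, lenzPoint, PiLp.norm_single, PiLp.norm_single,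
      norm_inv_sqrt_two_smul_cayley_sq, norm_inv_sqrt_two_smul_cayley_sq]
    norm_num)

end Lenz

lemma two_mul_card_edgeFinset_le_unitPairs {V : Type*} [Fintype V] {G : SimpleGraph V}
    [DecidableRel G.Adj] {d : ℕ} {f : V → EuclideanSpace ℝ (Fin d)} (hf : Injective f)
    (hG : ∀ ⦃v w⦄, G.Adj v w → dist (f v) (f w) = 1) :
    2 * #G.edgeFinset ≤ unitPairs (univ.image f) := by
  classical
  rw [two_mul_card_edgeFinset, unitPairs]
  refine card_le_card_of_injOn (Prod.map f f) (fun q hq => ?_) (hf.prodMap hf).injOn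
  simp only [coe_filter, mem_univ, true_and] at hq
  simp [hf.ne_iff, hq.ne, hG hq]

/-- Lenz lower bound: for even `d = 2p ≥ 4` there is an `n`-point set in ℝ^d with at
least `t_p(n)` unit-distance pairs. -/
theorem stmt_16 (p : ℕ) (hp : 2 ≤ p) (d : ℕ) (hd : d = 2 * p) (n : ℕ) :
    ∃ S : Finset (EuclideanSpace ℝ (Fin d)), S.card = n ∧
      2 * (SimpleGraph.turanGraph n p).edgeFinset.card ≤ unitPairs S := by
  subst hd
  have : NeZero p := ⟨by omega⟩
  let L := ((stdOrthonormalBasis ℝ _).reindex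
    (finCongr ((finrank_piLp_complex (Fin p)).trans (congrArg _ (Fintype.card_fin p))))).repr
  let f : Fin n → EuclideanSpace ℝ (Fin (2 * p)) := fun k => L (lenzPoint (Nat.divModEquiv p k))
  have hf : Injective f := L.injective.comp <|
    lenzPoint_injective.comp ((Nat.divModEquiv p).injective.comp Fin.val_injective)
  refine ⟨univ.image f, by rw [card_image_of_injective _ hf, card_univ, Fintype.card_fin],
    two_mul_card_edgeFinset_le_unitPairs hf fun k l hkl => ?_⟩
  rw [LinearIsometryEquiv.dist_map]
  -- `Nat.divModEquiv p k = (k / p, k % p)`: the circle of `k` is its Turán part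
  refine dist_lenzPoint_of_ne fun h => (turanGraph_adj.mp hkl) ?_
  simpa [Nat.divModEquiv, Fin.ext_iff] using h
end

section
/- The complete (p+1)-partite graph K_{p+1}(3) with 3 vertices in each class does not embed in ℝ^d as a unit-distance graph when d = 2p: there do not exist sets A₁, …, A_{p+1} ⊆ ℝ^{2p}, each of size 3 and consisting of affinely independent (non-collinear) triples, with every point of Aᵢ at distance 1 from every point of Aⱼ for all i ≠ j. -/
/-!
If every point of `A` is at the same distance from every point of `B`, then any two points
`b, b' ∈ B` lie on the perpendicular bisector of any two points `a, a' ∈ A`, so `b - b' ⟂ a - a'`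
and the direction spaces of `A` and `B` are orthogonal. A non-collinear set has a direction space
of dimension at least 2, so `p + 1` pairwise orthogonal such spaces need dimension `2p + 2 > 2p`.
-/

open Module

theorem iSupIndep.sum_finrank_le {ι K V : Type*} [Fintype ι] [DivisionRing K] [AddCommGroup V]
    [Module K V] [FiniteDimensional K V] {W : ι → Submodule K V} (hW : iSupIndep W) :
    ∑ i, finrank K (W i) ≤ finrank K V := by
  classical
  rw [← finrank_directSum]
  exact LinearMap.finrank_le_finrank_of_injective hW.dfinsupp_lsum_injective

section

variable {V P : Type*} [NormedAddCommGroup V] [InnerProductSpace ℝ V] [MetricSpace P]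
  [NormedAddTorsor V P]

theorem EuclideanGeometry.isOrtho_vectorSpan_of_dist_eq {s t : Set P} {r : ℝ}
    (h : ∀ a ∈ s, ∀ b ∈ t, dist a b = r) : vectorSpan ℝ s ⟂ vectorSpan ℝ t := by
  rw [vectorSpan_def, vectorSpan_def, Submodule.isOrtho_span]
  rintro _ ⟨a, ha, a', ha', rfl⟩ _ ⟨b, hb, b', hb', rfl⟩
  rw [real_inner_comm]
  refine EuclideanGeometry.inner_vsub_vsub_of_dist_eq_of_dist_eq ?_ ?_
  · rw [h a ha b' hb', h a' ha' b' hb']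
  · rw [h a ha b hb, h a' ha' b hb]

theorem EuclideanGeometry.two_mul_card_le_finrank_of_dist_eq [FiniteDimensional ℝ V]
    {ι : Type*} [Fintype ι] {A : ι → Set P} (hA : ∀ i, ¬ Collinear ℝ (A i)) {r : ℝ}
    (hdist : ∀ i j, i ≠ j → ∀ a ∈ A i, ∀ b ∈ A j, dist a b = r) :
    2 * Fintype.card ι ≤ finrank ℝ V := by
  have hortho : Pairwise fun i j => vectorSpan ℝ (A i) ⟂ vectorSpan ℝ (A j) := fun i j hij =>
    isOrtho_vectorSpan_of_dist_eq (hdist i j hij)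
  have hrank : ∀ i, 2 ≤ finrank ℝ (vectorSpan ℝ (A i)) := fun i =>
    not_le.mp (collinear_iff_finrank_le_one.not.mp (hA i))
  calc 2 * Fintype.card ι = ∑ _i : ι, 2 := by simp [mul_comm]
    _ ≤ ∑ i, finrank ℝ (vectorSpan ℝ (A i)) := Finset.sum_le_sum fun i _ => hrank i
    _ ≤ finrank ℝ V := (orthogonalFamily_iff_pairwise.mpr hortho).independent.sum_finrank_le

end

theorem stmt_18_general (p : ℕ)
    (A : Fin (p + 1) → Finset (EuclideanSpace ℝ (Fin (2 * p))))
    (hncol : ∀ i, ¬ Collinear ℝ (A i : Set (EuclideanSpace ℝ (Fin (2 * p)))))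
    (hdist : ∀ i j, i ≠ j → ∀ a ∈ A i, ∀ b ∈ A j, dist a b = 1) :
    False := by
  have h := EuclideanGeometry.two_mul_card_le_finrank_of_dist_eq hncol hdist
  rw [Fintype.card_fin, finrank_euclideanSpace_fin] at h
  omega

/-- `K_{p+1}(3)` with non-collinear classes does not embed as a unit-distance graph
in ℝ^{2p}. -/
theorem stmt_18 (p : ℕ) (hp : 2 ≤ p)
    (A : Fin (p + 1) → Finset (EuclideanSpace ℝ (Fin (2 * p))))
    (hcard : ∀ i, (A i).card = 3)
    (hncol : ∀ i, ¬ Collinear ℝ (A i : Set (EuclideanSpace ℝ (Fin (2 * p)))))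
    (hdist : ∀ i j, i ≠ j → ∀ a ∈ A i, ∀ b ∈ A j, dist a b = 1) :
    False :=
  stmt_18_general p A hncol hdist
end
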